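/- arXiv:2604.06717 — 4 statements merged into one kernel-verified Lean document; each statement's English description precedes it below -/
import Mathlib

section
/- Let s ∈ (0,1), α ∈ (0,2s], κ > 0, C₁ > 0, and let φ : ℝ → ℝ be smooth, bounded, increasing, with φ(x) = −1 + C₁|x|^{−α} for x < −κ and φ(x) = 1 − C₂|x|^{−β} for x > κ (β ∈ (0,2s], C₂ > 0). Then lim_{x→−∞} |x|^{2s}·L_s φ(x) = 1/s, where L_s φ(x) = PV ∫_ℝ (φ(y) − φ(x))/|x−y|^{1+2s} dy. -/
open MeasureTheory Filter Set Topology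

/-- MVT bound: `0 ≤ (1-t)^(-α) + (1+t)^(-α) - 2 ≤ 20*α*t^2` on `(0, 1/2]`. -/
lemma aux_H (α : ℝ) (hα0 : 0 < α) (hα2 : α ≤ 2) {t : ℝ} (ht0 : 0 < t) (ht : t ≤ 1/2) :
    0 ≤ (1-t) ^ (-α) + (1+t) ^ (-α) - 2 ∧
      (1-t) ^ (-α) + (1+t) ^ (-α) - 2 ≤ 20*α*t^2 := by
  have hder : ∀ u ∈ Set.Icc (0:ℝ) (1/2), HasDerivAt (fun u : ℝ => (1-u) ^ (-α) + (1+u) ^ (-α))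
      (α * ((1-u) ^ (-α-1) - (1+u) ^ (-α-1))) u := by
    intro u hu
    have h1u : (0:ℝ) < 1 - u := by have := hu.2; linarith
    have h1u' : (0:ℝ) < 1 + u := by have := hu.1; linarith
    have d1 : HasDerivAt (fun u : ℝ => (1-u) ^ (-α)) ((-1) * (-α) * (1-u) ^ (-α-1)) u :=
      ((hasDerivAt_id u).const_sub 1).rpow_const (Or.inl h1u.ne')
    have d2 : HasDerivAt (fun u : ℝ => (1+u) ^ (-α)) (1 * (-α) * (1+u) ^ (-α-1)) u :=
      ((hasDerivAt_id u).const_add 1).rpow_const (Or.inl h1u'.ne')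
    exact (d1.add d2).congr_deriv (by ring)
  have hd_nonneg : ∀ u ∈ Set.Icc (0:ℝ) (1/2), 0 ≤ α * ((1-u) ^ (-α-1) - (1+u) ^ (-α-1)) := by
    intro u hu
    have h1u : (0:ℝ) < 1 - u := by have := hu.2; linarith
    have h1u' : (1:ℝ) ≤ 1 + u := by have := hu.1; linarith
    have hb : (1+u) ^ (-α-1) ≤ 1 :=
      Real.rpow_le_one_of_one_le_of_nonpos h1u' (by linarith)
    have ha : (1:ℝ) ≤ (1-u) ^ (-α-1) :=
      Real.one_le_rpow_of_pos_of_le_one_of_nonpos h1u (by have := hu.1; linarith) (by linarith)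
    nlinarith
  have hd_le : ∀ u ∈ Set.Icc (0:ℝ) (1/2), α * ((1-u) ^ (-α-1) - (1+u) ^ (-α-1)) ≤ 20*α*u := by
    intro u hu
    obtain ⟨hu0, hu2⟩ := hu
    have h1u : (0:ℝ) < 1 - u := by linarith
    have h1u' : (1:ℝ) ≤ 1 + u := by linarith
    have e1 : (1-u) ^ (-α-1) ≤ (1-u) ^ (-3:ℝ) :=
      Real.rpow_le_rpow_of_exponent_ge h1u (by linarith) (by linarith)
    have e2 : (1+u) ^ (-3:ℝ) ≤ (1+u) ^ (-α-1) :=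
      Real.rpow_le_rpow_of_exponent_le h1u' (by linarith)
    have e3 : (1-u) ^ (-3:ℝ) = ((1-u)^(3:ℕ))⁻¹ := by
      rw [show (-3:ℝ) = -((3:ℕ):ℝ) by norm_num, Real.rpow_neg h1u.le, Real.rpow_natCast]
    have e4 : (1+u) ^ (-3:ℝ) = ((1+u)^(3:ℕ))⁻¹ := by
      rw [show (-3:ℝ) = -((3:ℕ):ℝ) by norm_num, Real.rpow_neg (by linarith), Real.rpow_natCast]
    have hA : (0:ℝ) < (1-u)^(3:ℕ) := by positivity
    have hB : (0:ℝ) < (1+u)^(3:ℕ) := by positivity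
    have key : ((1-u)^(3:ℕ))⁻¹ - ((1+u)^(3:ℕ))⁻¹ ≤ 20*u := by
      rw [inv_sub_inv hA.ne' hB.ne', div_le_iff₀ (by positivity)]
      have h4 : (1-u)^(3:ℕ)*(1+u)^(3:ℕ) = (1-u^2)^(3:ℕ) := by ring
      have h2 : (3/4:ℝ) ≤ 1 - u^2 := by nlinarith
      have h3 : ((3:ℝ)/4)^(3:ℕ) ≤ (1-u^2)^(3:ℕ) := pow_le_pow_left₀ (by norm_num) h2 3
      have h5 : u^3 ≤ u/4 := by nlinarith
      have h6 := mul_le_mul_of_nonneg_left h3 (by positivity : (0:ℝ) ≤ 20*u)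
      nlinarith [h6]
    have : (1-u) ^ (-α-1) - (1+u) ^ (-α-1) ≤ 20*u := by
      calc (1-u) ^ (-α-1) - (1+u) ^ (-α-1) ≤ (1-u) ^ (-3:ℝ) - (1+u) ^ (-3:ℝ) := by linarith
        _ = ((1-u)^(3:ℕ))⁻¹ - ((1+u)^(3:ℕ))⁻¹ := by rw [e3, e4]
        _ ≤ 20*u := key
    calc α * ((1-u) ^ (-α-1) - (1+u) ^ (-α-1)) ≤ α * (20*u) :=
          mul_le_mul_of_nonneg_left this hα0.le
      _ = 20*α*u := by ring
  obtain ⟨ξ, hξ, hslope⟩ := exists_hasDerivAt_eq_slope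
      (fun u : ℝ => (1-u) ^ (-α) + (1+u) ^ (-α))
      (fun u => α * ((1-u) ^ (-α-1) - (1+u) ^ (-α-1))) ht0
      (fun u hu => (hder u ⟨hu.1, hu.2.trans ht⟩).continuousAt.continuousWithinAt)
      (fun u hu => hder u ⟨hu.1.le, hu.2.le.trans ht⟩)
  have hξ' : ξ ∈ Set.Icc (0:ℝ) (1/2) := ⟨hξ.1.le, hξ.2.le.trans ht⟩
  have h0 : (1-(0:ℝ)) ^ (-α) + (1+(0:ℝ)) ^ (-α) = 2 := by norm_num [Real.one_rpow]
  rw [h0, sub_zero] at hslope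
  have hH : (1-t) ^ (-α) + (1+t) ^ (-α) - 2 = t * (α * ((1-ξ) ^ (-α-1) - (1+ξ) ^ (-α-1))) := by
    field_simp at hslope
    linarith [hslope]
  constructor
  · rw [hH]
    exact mul_nonneg ht0.le (hd_nonneg ξ hξ')
  · rw [hH]
    calc t * (α * ((1-ξ) ^ (-α-1) - (1+ξ) ^ (-α-1))) ≤ t * (20*α*ξ) :=
          mul_le_mul_of_nonneg_left (hd_le ξ hξ') ht0.le
      _ ≤ t * (20*α*t) := by
          have h6 : 0 ≤ t*α*(t-ξ) :=
            mul_nonneg (mul_nonneg ht0.le hα0.le) (sub_nonneg.2 hξ.2.le)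
          nlinarith [h6]
      _ = 20*α*t^2 := by ring

set_option maxHeartbeats 1600000 in
/-- Asymptotics at `-∞` of the fractional Laplacian of a power-type transition layer:
`|x|^{2s} L_s φ(x) → 1/s` as `x → -∞`. -/
theorem stmt_4 (s α β κ C₁ C₂ : ℝ) (hs : s ∈ Set.Ioo (0 : ℝ) 1)
    (hα : α ∈ Set.Ioc 0 (2 * s)) (hβ : β ∈ Set.Ioc 0 (2 * s))
    (hκ : 0 < κ) (hC₁ : 0 < C₁) (hC₂ : 0 < C₂)
    (φ : ℝ → ℝ) (hφ : ContDiff ℝ (⊤ : ℕ∞) φ) (hφ' : ∀ x : ℝ, 0 < deriv φ x)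
    (hleft : ∀ x : ℝ, x < -κ → φ x = -1 + C₁ * |x| ^ (-α))
    (hright : ∀ x : ℝ, κ < x → φ x = 1 - C₂ * |x| ^ (-β))
    (Lφ : ℝ → ℝ)
    (hL : ∀ x : ℝ, Tendsto
      (fun ε : ℝ => ∫ y in {y : ℝ | ε < |y - x|}, (φ y - φ x) / |x - y| ^ (1 + 2 * s))
      (nhdsWithin 0 (Set.Ioi 0)) (nhds (Lφ x))) :
    Tendsto (fun x : ℝ => |x| ^ (2 * s) * Lφ x) atBot (nhds (1 / s)) := by
  obtain ⟨hs0, hs1⟩ := hs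
  obtain ⟨hα0, hα2⟩ := hα
  obtain ⟨hβ0, hβ2⟩ := hβ
  have hmono : StrictMono φ := strictMono_of_deriv_pos hφ'
  have hφ_lt_one : ∀ y, φ y < 1 := by
    intro y
    have hzy : y < max y κ + 1 := lt_of_le_of_lt (le_max_left y κ) (lt_add_one _)
    have hzκ : κ < max y κ + 1 := lt_of_le_of_lt (le_max_right y κ) (lt_add_one _)
    have habs : (0:ℝ) < |max y κ + 1| := abs_pos.2 (by linarith)
    have hpos : 0 < C₂ * |max y κ + 1| ^ (-β) :=
      mul_pos hC₂ (Real.rpow_pos_of_pos habs _)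
    calc φ y < φ (max y κ + 1) := hmono hzy
      _ = 1 - C₂ * |max y κ + 1| ^ (-β) := hright _ hzκ
      _ < 1 := by linarith
  have hφ_gt : ∀ y, -1 < φ y := by
    intro y
    have hzy : min y (-κ) - 1 < y := lt_of_le_of_lt (by linarith [min_le_left y (-κ)] : min y (-κ) - 1 ≤ y - 1) (by linarith)
    have hzκ : min y (-κ) - 1 < -κ := by linarith [min_le_right y (-κ)]
    have habs : (0:ℝ) < |min y (-κ) - 1| := abs_pos.2 (by linarith [min_le_right y (-κ)])
    have hpos : 0 < C₁ * |min y (-κ) - 1| ^ (-α) :=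
      mul_pos hC₁ (Real.rpow_pos_of_pos habs _)
    calc (-1:ℝ) < -1 + C₁ * |min y (-κ) - 1| ^ (-α) := by linarith
      _ = φ (min y (-κ) - 1) := (hleft _ hzκ).symm
      _ < φ y := hmono hzy
  have hφabs : ∀ y, |φ y| ≤ 1 := fun y => abs_le.2 ⟨(hφ_gt y).le, (hφ_lt_one y).le⟩
  have hφtop : Tendsto φ atTop (nhds 1) := by
    have h1 : Tendsto (fun x : ℝ => C₂ * |x| ^ (-β)) atTop (nhds (C₂ * 0)) :=
      ((tendsto_rpow_neg_atTop hβ0).comp tendsto_abs_atTop_atTop).const_mul C₂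
    have h2 : Tendsto (fun x : ℝ => 1 - C₂ * |x| ^ (-β)) atTop (nhds 1) := by
      simpa using tendsto_const_nhds.sub h1
    refine h2.congr' ?_
    filter_upwards [eventually_gt_atTop κ] with x hx
    exact (hright x hx).symm
  have hφbot : Tendsto φ atBot (nhds (-1)) := by
    have h1 : Tendsto (fun x : ℝ => C₁ * |x| ^ (-α)) atBot (nhds (C₁ * 0)) :=
      ((tendsto_rpow_neg_atTop hα0).comp tendsto_abs_atBot_atTop).const_mul C₁
    have h2 : Tendsto (fun x : ℝ => -1 + C₁ * |x| ^ (-α)) atBot (nhds (-1)) := by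
      simpa using tendsto_const_nhds.add h1
    refine h2.congr' ?_
    filter_upwards [eventually_lt_atBot (-κ)] with x hx
    exact (hleft x hx).symm
  set c : ℝ := 1 + 2*s with hcdef
  have hc1 : 1 < c := by simp only [hcdef]; linarith
  have hcneg : -c < -1 := by linarith
  set R₀ : ℝ := max (2*κ + 1) 1 with hR₀def
  set Ψ : ℝ → ℝ → ℝ := fun R t => (φ (-R + R*t) + φ (-R - R*t) - 2*φ (-R)) / t ^ c with hΨdef
  set K : ℝ := 20*α*C₁ with hKdef
  set g : ℝ → ℝ := fun t => (Set.Ioc (0:ℝ) (1/2)).indicator (fun t => K * t^(1-2*s)) t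
      + (Set.Ioi (1/2:ℝ)).indicator (fun t => 4 * t^(-c)) t with hgdef
  have hg_int : IntegrableOn g (Set.Ioi 0) := by
    have i1 : IntegrableOn (fun t : ℝ => K * t^(1-2*s)) (Set.Ioc 0 (1/2)) := by
      have h := intervalIntegral.intervalIntegrable_rpow' (a := 0) (b := 1/2)
        (r := 1-2*s) (by linarith)
      rw [intervalIntegrable_iff, Set.uIoc_of_le (by norm_num : (0:ℝ) ≤ 1/2)] at h
      exact h.const_mul K
    have i2 : IntegrableOn (fun t : ℝ => 4 * t^(-c)) (Set.Ioi (1/2:ℝ)) :=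
      (integrableOn_Ioi_rpow_of_lt hcneg (by norm_num)).const_mul 4
    exact ((i1.integrable_indicator measurableSet_Ioc).add
      (i2.integrable_indicator measurableSet_Ioi)).integrableOn
  have hΨcont : ∀ R : ℝ, ContinuousOn (Ψ R) (Set.Ioi (0:ℝ)) := by
    intro R
    apply ContinuousOn.div
    · exact (((hφ.continuous.comp (continuous_const.add (continuous_const.mul continuous_id))).add
        (hφ.continuous.comp (continuous_const.sub (continuous_const.mul continuous_id)))).sub
        continuous_const).continuousOn
    · exact fun t ht => (Real.continuousAt_rpow_const t c
        (Or.inl (ne_of_gt (Set.mem_Ioi.mp ht)))).continuousWithinAt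
    · exact fun t ht => (Real.rpow_pos_of_pos (Set.mem_Ioi.mp ht) c).ne'
  have hΨmeas : ∀ R : ℝ, AEStronglyMeasurable (Ψ R) (volume.restrict (Set.Ioi (0:ℝ))) :=
    fun R => (hΨcont R).aestronglyMeasurable measurableSet_Ioi
  have hbound : ∀ R : ℝ, R₀ ≤ R → ∀ t ∈ Set.Ioi (0:ℝ), |Ψ R t| ≤ g t := by
    intro R hR t ht
    have ht0 : (0:ℝ) < t := Set.mem_Ioi.mp ht
    have hR1 : (1:ℝ) ≤ R := le_trans (le_max_right _ _) hR
    have hRκ : 2*κ + 1 ≤ R := le_trans (le_max_left _ _) hR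
    have hR0 : (0:ℝ) < R := by linarith
    have htc : (0:ℝ) < t ^ c := Real.rpow_pos_of_pos ht0 c
    by_cases h : t ≤ 1/2
    · have hgt : g t = K * t^(1-2*s) := by
        simp only [hgdef]
        rw [Set.indicator_of_mem (show t ∈ Set.Ioc (0:ℝ) (1/2) from ⟨ht0, h⟩),
          Set.indicator_of_notMem (show t ∉ Set.Ioi (1/2:ℝ) by simpa using h), add_zero]
      have ha1 : -R + R*t < -κ := by nlinarith
      have ha2 : -R - R*t < -κ := by nlinarith
      have ha3 : -R < -κ := by linarith
      have habs1 : |(-R + R*t)| = R*(1-t) := by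
        rw [abs_of_nonpos (by nlinarith)]; ring
      have habs2 : |(-R - R*t)| = R*(1+t) := by
        rw [abs_of_nonpos (by nlinarith)]; ring
      have habs3 : |(-R)| = R := by rw [abs_of_nonpos (by linarith)]; ring
      have hnum : φ (-R + R*t) + φ (-R - R*t) - 2*φ (-R)
          = C₁ * R^(-α) * ((1-t)^(-α) + (1+t)^(-α) - 2) := by
        rw [hleft _ ha1, hleft _ ha2, hleft _ ha3, habs1, habs2, habs3,
          Real.mul_rpow hR0.le (by linarith : (0:ℝ) ≤ 1-t),
          Real.mul_rpow hR0.le (by linarith : (0:ℝ) ≤ 1+t)]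
        ring
      obtain ⟨hH0, hH1⟩ := aux_H α hα0 (by linarith) ht0 h
      have hRα : R^(-α) ≤ 1 := Real.rpow_le_one_of_one_le_of_nonpos hR1 (by linarith)
      have hRα0 : (0:ℝ) < R^(-α) := Real.rpow_pos_of_pos hR0 _
      have hΨval : Ψ R t = (C₁ * R^(-α) * ((1-t)^(-α)+(1+t)^(-α)-2)) / t^c := by
        simp only [hΨdef]; rw [hnum]
      rw [hgt, hΨval, abs_div, abs_of_nonneg htc.le,
        abs_of_nonneg (mul_nonneg (mul_nonneg hC₁.le hRα0.le) hH0), div_le_iff₀ htc]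
      have hexp : t^(1-2*s) * t^c = t^(2:ℕ) := by
        rw [← Real.rpow_natCast t 2, ← Real.rpow_add ht0]
        congr 1
        simp only [hcdef]; push_cast; ring
      have l1 : C₁ * R^(-α) * ((1-t)^(-α)+(1+t)^(-α)-2)
          ≤ C₁ * ((1-t)^(-α)+(1+t)^(-α)-2) := by
        rw [mul_assoc]
        exact mul_le_mul_of_nonneg_left (mul_le_of_le_one_left hH0 hRα) hC₁.le
      have l2 : C₁ * ((1-t)^(-α)+(1+t)^(-α)-2) ≤ C₁ * (20*α*t^2) :=
        mul_le_mul_of_nonneg_left hH1 hC₁.le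
      calc C₁ * R^(-α) * ((1-t)^(-α)+(1+t)^(-α)-2) ≤ C₁ * (20*α*t^2) := le_trans l1 l2
        _ = K * t^(2:ℕ) := by simp only [hKdef]; ring
        _ = K * (t^(1-2*s) * t^c) := by rw [hexp]
        _ = K * t^(1-2*s) * t^c := by ring
    · push_neg at h
      have hgt : g t = 4 * t^(-c) := by
        simp only [hgdef]
        rw [Set.indicator_of_notMem (by simp [Set.mem_Ioc]; intro _; linarith),
          Set.indicator_of_mem (Set.mem_Ioi.mpr h), zero_add]
      have hnum : |φ (-R + R*t) + φ (-R - R*t) - 2*φ (-R)| ≤ 4 := by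
        have b1 := abs_le.mp (hφabs (-R + R*t))
        have b2 := abs_le.mp (hφabs (-R - R*t))
        have b3 := abs_le.mp (hφabs (-R))
        rw [abs_le]; constructor <;> linarith [b1.1, b1.2, b2.1, b2.2, b3.1, b3.2]
      have hΨabs : |Ψ R t| = |φ (-R + R*t) + φ (-R - R*t) - 2*φ (-R)| / t^c := by
        simp only [hΨdef]; rw [abs_div, abs_of_nonneg htc.le]
      rw [hgt, hΨabs, Real.rpow_neg ht0.le, div_le_iff₀ htc, mul_assoc,
        inv_mul_cancel₀ htc.ne', mul_one]
      exact hnum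
  have hΨint : ∀ R : ℝ, R₀ ≤ R → IntegrableOn (Ψ R) (Set.Ioi 0) := by
    intro R hR
    refine hg_int.mono' (hΨmeas R) ?_
    exact (ae_restrict_iff' measurableSet_Ioi).mpr (Filter.Eventually.of_forall fun t ht => by
      simpa [Real.norm_eq_abs] using hbound R hR t ht)
  have hkey : ∀ x : ℝ, x ≤ -R₀ → |x| ^ (2*s) * Lφ x = ∫ t in Set.Ioi (0:ℝ), Ψ (-x) t := by
    intro x hx
    set R : ℝ := -x with hRdef
    have hRR₀ : R₀ ≤ R := by simp only [hRdef]; linarith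
    have hR1 : (1:ℝ) ≤ R := le_trans (le_max_right _ _) hRR₀
    have hR0 : (0:ℝ) < R := by linarith
    have hxabs : |x| = R := by
      rw [hRdef, abs_of_nonpos (by linarith)]
    set f : ℝ → ℝ := fun z => (φ (x+z) - φ x) / |z| ^ c with hfdef
    -- generic integrability on tails
    have haux : ∀ ψ : ℝ → ℝ, Continuous ψ → (∀ y, |ψ y| ≤ 2) →
        ∀ ε : ℝ, 0 < ε → IntegrableOn (fun z => ψ z / |z| ^ c) (Set.Ioi ε) := by
      intro ψ hψc hψb ε hε
      have hb : IntegrableOn (fun z : ℝ => 2 * z ^ (-c)) (Set.Ioi ε) :=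
        (integrableOn_Ioi_rpow_of_lt hcneg hε).const_mul 2
      refine hb.mono' ?_ ?_
      · refine (ContinuousOn.div hψc.continuousOn
          (continuous_abs.continuousOn.rpow_const fun z hz =>
            Or.inl (abs_ne_zero.2 (ne_of_gt (lt_trans hε hz))))
          (fun z hz => ?_)).aestronglyMeasurable measurableSet_Ioi
        exact (Real.rpow_pos_of_pos (abs_pos.2 (ne_of_gt (lt_trans hε hz))) c).ne'
      · refine (ae_restrict_iff' measurableSet_Ioi).mpr (Filter.Eventually.of_forall
          fun z hz => ?_)
        have hz0 : (0:ℝ) < z := lt_trans hε hz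
        have habs : |z| = z := abs_of_pos hz0
        have hzc : (0:ℝ) < z ^ c := Real.rpow_pos_of_pos hz0 c
        rw [Real.norm_eq_abs, abs_div, habs, abs_of_nonneg hzc.le, Real.rpow_neg hz0.le,
          div_eq_mul_inv]
        exact mul_le_mul_of_nonneg_right (hψb z) (inv_nonneg.2 hzc.le)
    have hψ1 : ∀ y : ℝ, |φ (x + y) - φ x| ≤ 2 := fun y => by
      have b1 := abs_le.mp (hφabs (x + y)); have b2 := abs_le.mp (hφabs x)
      rw [abs_le]; constructor <;> linarith [b1.1, b1.2, b2.1, b2.2]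
    have hψ2 : ∀ y : ℝ, |φ (x - y) - φ x| ≤ 2 := fun y => by
      have b1 := abs_le.mp (hφabs (x - y)); have b2 := abs_le.mp (hφabs x)
      rw [abs_le]; constructor <;> linarith [b1.1, b1.2, b2.1, b2.2]
    have hfint : ∀ ε : ℝ, 0 < ε → IntegrableOn f (Set.Ioi ε) := by
      intro ε hε
      exact haux (fun y => φ (x + y) - φ x)
        ((hφ.continuous.comp (continuous_const.add continuous_id)).sub continuous_const)
        hψ1 ε hε
    have hfneg : (fun z => f (-z)) = fun z => (φ (x - z) - φ x) / |z| ^ c := by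
      funext z
      simp only [hfdef, abs_neg]
      rw [← sub_eq_add_neg]
    have hfnegint : ∀ ε : ℝ, 0 < ε → IntegrableOn (fun z => f (-z)) (Set.Ioi ε) := by
      intro ε hε
      rw [hfneg]
      exact haux (fun y => φ (x - y) - φ x)
        ((hφ.continuous.comp (continuous_const.sub continuous_id)).sub continuous_const)
        hψ2 ε hε
    have hfintIio : ∀ ε : ℝ, 0 < ε → IntegrableOn f (Set.Iio (-ε)) := by
      intro ε hε
      have hpre : (Neg.neg : ℝ → ℝ) ⁻¹' (Set.Iio (-ε)) = Set.Ioi ε := by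
        ext z; simp [Set.mem_Iio, Set.mem_Ioi, neg_lt_neg_iff]
      have hmp : MeasurePreserving (Neg.neg : ℝ → ℝ)
          (volume.restrict (Set.Ioi ε)) (volume.restrict (Set.Iio (-ε))) := by
        have := (Measure.measurePreserving_neg (volume : Measure ℝ)).restrict_preimage_emb
          (Homeomorph.neg ℝ).measurableEmbedding (Set.Iio (-ε))
        rwa [hpre] at this
      exact (hmp.integrable_comp_emb (Homeomorph.neg ℝ).measurableEmbedding).mp
        (hfnegint ε hε)
    -- splitting the truncated integral
    have hsplit : ∀ ε : ℝ, 0 < ε →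
        (∫ y in {y : ℝ | ε < |y - x|}, (φ y - φ x) / |x - y| ^ c)
          = ∫ z in Set.Ioi ε, (f z + f (-z)) := by
      intro ε hε
      have htrans := (measurePreserving_add_right volume x).setIntegral_preimage_emb
        (Homeomorph.addRight x).measurableEmbedding
        (fun y => (φ y - φ x) / |x - y| ^ c) {y : ℝ | ε < |y - x|}
      have hpre : (fun z : ℝ => z + x) ⁻¹' {y : ℝ | ε < |y - x|} = {z : ℝ | ε < |z|} := by
        ext z; simp [add_sub_cancel_right]
      have hG : ∀ z : ℝ, (φ (z + x) - φ x) / |x - (z + x)| ^ c = f z := by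
        intro z
        simp only [hfdef]
        rw [show x - (z + x) = -z by ring, abs_neg, add_comm z x]
      rw [← htrans, hpre]
      simp_rw [hG]
      have hsetsplit : {z : ℝ | ε < |z|} = Set.Iio (-ε) ∪ Set.Ioi ε := by
        ext z
        simp only [Set.mem_setOf_eq, Set.mem_union, Set.mem_Iio, Set.mem_Ioi, lt_abs]
        constructor
        · rintro (h | h)
          · right; exact h
          · left; linarith
        · rintro (h | h)
          · right; linarith
          · left; exact h
      have hdisj : Disjoint (Set.Iio (-ε)) (Set.Ioi ε) := by
        rw [Set.disjoint_left]
        intro z hz hz'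
        simp only [Set.mem_Iio] at hz
        simp only [Set.mem_Ioi] at hz'
        linarith
      rw [hsetsplit, setIntegral_union hdisj measurableSet_Ioi (hfintIio ε hε) (hfint ε hε)]
      have hrefl : (∫ z in Set.Iio (-ε), f z) = ∫ z in Set.Ioi ε, f (-z) := by
        rw [integral_comp_neg_Ioi, integral_Iic_eq_integral_Iio]
      rw [hrefl, ← integral_add (hfnegint ε hε) (hfint ε hε)]
      refine setIntegral_congr_fun measurableSet_Ioi fun z hz => ?_
      ring
    -- scaling
    have hpt : ∀ z ∈ Set.Ioi (0:ℝ), f z + f (-z) = (R^c)⁻¹ * Ψ R (R⁻¹ * z) := by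
      intro z hz
      have hz0 : (0:ℝ) < z := Set.mem_Ioi.mp hz
      have habs : |z| = z := abs_of_pos hz0
      have hzc : (0:ℝ) < z ^ c := Real.rpow_pos_of_pos hz0 c
      have hRc : (0:ℝ) < R ^ c := Real.rpow_pos_of_pos hR0 c
      have harg : R * (R⁻¹ * z) = z := mul_inv_cancel_left₀ hR0.ne' z
      have hnegR : -R = x := by rw [hRdef, neg_neg]
      have hdenom : (R⁻¹ * z) ^ c = (R ^ c)⁻¹ * z ^ c := by
        rw [Real.mul_rpow (inv_nonneg.2 hR0.le) hz0.le, Real.inv_rpow hR0.le]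
      simp only [hΨdef, hfdef, abs_neg, habs, harg, hnegR, hdenom]
      rw [← sub_eq_add_neg]
      field_simp
      ring
    have hscale : ∀ ε : ℝ, 0 < ε → (∫ z in Set.Ioi ε, (f z + f (-z)))
        = (R^c)⁻¹ * R * ∫ t in Set.Ioi (R⁻¹ * ε), Ψ R t := by
      intro ε hε
      rw [setIntegral_congr_fun measurableSet_Ioi
        (fun z hz => hpt z (Set.mem_Ioi.mpr (lt_trans hε (Set.mem_Ioi.mp hz)))),
        integral_const_mul, MeasureTheory.integral_comp_mul_left_Ioi (Ψ R) ε (inv_pos.2 hR0)]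
      simp only [smul_eq_mul, inv_inv]
      ring
    -- limit of truncated integrals of Ψ R
    have hδ : Tendsto (fun δ : ℝ => ∫ t in Set.Ioi δ, Ψ R t) (nhdsWithin 0 (Set.Ioi 0))
        (nhds (∫ t in Set.Ioi (0:ℝ), Ψ R t)) := by
      have hDCT := tendsto_integral_filter_of_dominated_convergence
        (μ := volume.restrict (Set.Ioi (0:ℝ))) (l := nhdsWithin (0:ℝ) (Set.Ioi 0))
        (F := fun δ (t:ℝ) => (Set.Ioi δ).indicator (Ψ R) t) (f := Ψ R) g
        (Filter.Eventually.of_forall fun δ => (hΨmeas R).indicator measurableSet_Ioi)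
        (Filter.Eventually.of_forall fun δ => (ae_restrict_iff' measurableSet_Ioi).mpr
          (Filter.Eventually.of_forall fun t ht => le_trans
            (norm_indicator_le_norm_self _ _)
            (by simpa [Real.norm_eq_abs] using hbound R hRR₀ t ht)))
        hg_int
        (by
          filter_upwards [ae_restrict_mem measurableSet_Ioi] with t ht
          have htpos : (0:ℝ) < t := Set.mem_Ioi.mp ht
          refine tendsto_const_nhds.congr' ?_
          filter_upwards [eventually_nhdsWithin_of_eventually_nhds
            (eventually_lt_nhds htpos)] with δ hδt
          exact (Set.indicator_of_mem (Set.mem_Ioi.mpr hδt) _).symm)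
      refine hDCT.congr' ?_
      filter_upwards [self_mem_nhdsWithin] with δ hδ0
      rw [setIntegral_indicator measurableSet_Ioi, Set.Ioi_inter_Ioi,
        max_eq_right (le_of_lt hδ0)]
    have hcompε : Tendsto (fun ε : ℝ => R⁻¹ * ε) (nhdsWithin 0 (Set.Ioi 0))
        (nhdsWithin 0 (Set.Ioi 0)) := by
      refine tendsto_nhdsWithin_of_tendsto_nhds_of_eventually_within _ ?_ ?_
      · have : Tendsto (fun ε : ℝ => R⁻¹ * ε) (nhds 0) (nhds (R⁻¹ * 0)) :=
          (continuous_const.mul continuous_id).tendsto 0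
        rw [mul_zero] at this
        exact this.mono_left nhdsWithin_le_nhds
      · filter_upwards [self_mem_nhdsWithin] with ε hε
        exact Set.mem_Ioi.mpr (mul_pos (inv_pos.2 hR0) (Set.mem_Ioi.mp hε))
    have htail := hδ.comp hcompε
    have hT : Tendsto
        (fun ε : ℝ => ∫ y in {y : ℝ | ε < |y - x|}, (φ y - φ x) / |x - y| ^ c)
        (nhdsWithin 0 (Set.Ioi 0))
        (nhds ((R^c)⁻¹ * R * ∫ t in Set.Ioi (0:ℝ), Ψ R t)) := by
      have := htail.const_mul ((R^c)⁻¹ * R)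
      refine this.congr' ?_
      filter_upwards [self_mem_nhdsWithin] with ε hε0
      rw [hsplit ε (Set.mem_Ioi.mp hε0), hscale ε (Set.mem_Ioi.mp hε0)]
      rfl
    have huniq : Lφ x = (R^c)⁻¹ * R * ∫ t in Set.Ioi (0:ℝ), Ψ R t :=
      tendsto_nhds_unique (hL x) hT
    rw [hxabs, huniq]
    have h2 : R ^ (2*s) * (R ^ c)⁻¹ * R = 1 := by
      rw [← Real.rpow_neg hR0.le, ← Real.rpow_add hR0, ← Real.rpow_add_one (ne_of_gt hR0),
        show 2*s + -c + 1 = 0 by rw [hcdef]; ring, Real.rpow_zero]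
    calc R ^ (2*s) * ((R^c)⁻¹ * R * ∫ t in Set.Ioi (0:ℝ), Ψ R t)
        = (R ^ (2*s) * (R ^ c)⁻¹ * R) * ∫ t in Set.Ioi (0:ℝ), Ψ R t := by ring
      _ = ∫ t in Set.Ioi (0:ℝ), Ψ R t := by rw [h2, one_mul]
  set Lfun : ℝ → ℝ := (Set.Ioi (1:ℝ)).indicator (fun t => 2 / t ^ c) with hLdef
  have hlim : Tendsto (fun R => ∫ t in Set.Ioi (0:ℝ), Ψ R t) atTop (nhds (1/s)) := by
    have hptwise : ∀ t ∈ Set.Ioi (0:ℝ), t ≠ 1 →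
        Tendsto (fun R => Ψ R t) atTop (nhds (Lfun t)) := by
      intro t ht ht1
      have ht0 : (0:ℝ) < t := Set.mem_Ioi.mp ht
      have harg2 : Tendsto (fun R : ℝ => -R - R*t) atTop atBot := by
        have : Tendsto (fun R : ℝ => R * (-1 - t)) atTop atBot :=
          tendsto_id.atTop_mul_const_of_neg (by linarith)
        refine this.congr fun R => by ring
      have harg3 : Tendsto (fun R : ℝ => -R) atTop atBot := tendsto_neg_atTop_atBot
      rcases lt_or_gt_of_ne ht1 with hlt | hgt
      · -- 0 < t < 1 : limit 0
        have harg1 : Tendsto (fun R : ℝ => -R + R*t) atTop atBot := by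
          have : Tendsto (fun R : ℝ => R * (t - 1)) atTop atBot :=
            tendsto_id.atTop_mul_const_of_neg (by linarith)
          refine this.congr fun R => by ring
        have hnum : Tendsto (fun R => φ (-R + R*t) + φ (-R - R*t) - 2*φ (-R)) atTop
            (nhds ((-1) + (-1) - 2*(-1))) :=
          ((hφbot.comp harg1).add (hφbot.comp harg2)).sub
            ((hφbot.comp harg3).const_mul 2)
        have hL0 : Lfun t = 0 := by
          simp only [hLdef]
          exact Set.indicator_of_notMem (by simp [Set.mem_Ioi]; linarith) _
        rw [hL0]
        simp only [hΨdef]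
        have := hnum.div_const (t ^ c)
        norm_num at this
        exact this
      · -- t > 1 : limit 2 / t^c
        have harg1 : Tendsto (fun R : ℝ => -R + R*t) atTop atTop := by
          have : Tendsto (fun R : ℝ => R * (t - 1)) atTop atTop :=
            tendsto_id.atTop_mul_const (by linarith)
          refine this.congr fun R => by ring
        have hnum : Tendsto (fun R => φ (-R + R*t) + φ (-R - R*t) - 2*φ (-R)) atTop
            (nhds (1 + (-1) - 2*(-1))) :=
          ((hφtop.comp harg1).add (hφbot.comp harg2)).sub
            ((hφbot.comp harg3).const_mul 2)
        have hL2 : Lfun t = 2 / t ^ c := by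
          simp only [hLdef]
          exact Set.indicator_of_mem (Set.mem_Ioi.mpr hgt) _
        rw [hL2]
        simp only [hΨdef]
        have := hnum.div_const (t ^ c)
        norm_num at this
        exact this
    have hDCT : Tendsto (fun R => ∫ t in Set.Ioi (0:ℝ), Ψ R t) atTop
        (nhds (∫ t in Set.Ioi (0:ℝ), Lfun t)) := by
      refine tendsto_integral_filter_of_dominated_convergence g
        (Filter.Eventually.of_forall fun R => hΨmeas R) ?_ hg_int ?_
      · filter_upwards [eventually_ge_atTop R₀] with R hR
        exact (ae_restrict_iff' measurableSet_Ioi).mpr (Filter.Eventually.of_forall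
          fun t ht => by simpa [Real.norm_eq_abs] using hbound R hR t ht)
      · have hone : (volume.restrict (Set.Ioi (0:ℝ))) {(1:ℝ)} = 0 :=
          le_antisymm (le_trans (Measure.restrict_le_self _) (by simp)) (zero_le)
        have h1 : ∀ᵐ t ∂(volume.restrict (Set.Ioi (0:ℝ))), t ≠ 1 := by
          rw [ae_iff]
          simpa using hone
        have h2 : ∀ᵐ t ∂(volume.restrict (Set.Ioi (0:ℝ))), t ∈ Set.Ioi (0:ℝ) :=
          ae_restrict_mem measurableSet_Ioi
        filter_upwards [h1, h2] with t ht1 ht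
        exact hptwise t ht ht1
    have hval : (∫ t in Set.Ioi (0:ℝ), Lfun t) = 1/s := by
      rw [hLdef, setIntegral_indicator measurableSet_Ioi, Set.Ioi_inter_Ioi,
        max_eq_right (by norm_num : (0:ℝ) ≤ 1)]
      have hcongr : ∀ t ∈ Set.Ioi (1:ℝ), 2 / t ^ c = 2 * t ^ (-c) := by
        intro t ht
        rw [Real.rpow_neg (by linarith [Set.mem_Ioi.mp ht] : (0:ℝ) ≤ t)]
        ring
      rw [setIntegral_congr_fun measurableSet_Ioi hcongr, integral_const_mul,
        integral_Ioi_rpow_of_lt hcneg one_pos, Real.one_rpow]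
      have : -c + 1 = -(2*s) := by simp only [hcdef]; ring
      rw [this]
      field_simp
    rw [← hval]
    exact hDCT
  have hcomp : Tendsto (fun x : ℝ => ∫ t in Set.Ioi (0:ℝ), Ψ (-x) t) atBot (nhds (1/s)) :=
    hlim.comp tendsto_neg_atBot_atTop
  refine hcomp.congr' ?_
  filter_upwards [eventually_le_atBot (-R₀)] with x hx
  exact (hkey x hx).symm
end

section
/- With φ, s, β, C₂, κ as above, lim_{x→+∞} |x|^{2s}·L_s φ(x) = −1/s. -/
open MeasureTheory Filter Set Topology


private lemma map_sub_vol (x : ℝ) : Measure.map (fun y : ℝ => x - y) volume = volume := by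
  have h : (fun y : ℝ => x - y) = (fun z : ℝ => x + z) ∘ (fun y : ℝ => -y) := by
    ext y; simp [sub_eq_add_neg]
  rw [h, ← Measure.map_map (by fun_prop) (by fun_prop), Measure.map_neg_eq_self,
    map_add_left_eq_self]

private lemma sub_embed (x : ℝ) : MeasurableEmbedding (fun y : ℝ => x - y) := by
  have h : (fun y : ℝ => x - y) = (fun z : ℝ => x + z) ∘ (fun y : ℝ => -y) := by
    ext y; simp [sub_eq_add_neg]
  rw [h]
  exact ((Homeomorph.addLeft x).isClosedEmbedding.measurableEmbedding).comp
    ((Homeomorph.neg ℝ).isClosedEmbedding.measurableEmbedding)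

private lemma integral_comp_sub_Iio (f : ℝ → ℝ) (x c : ℝ) :
    ∫ y in Iio c, f (x - y) = ∫ t in Ioi (x - c), f t := by
  have h1 : (fun y : ℝ => x - y) ⁻¹' (Ioi (x - c)) = Iio c := by
    ext y; simp [sub_lt_sub_iff_left]
  conv_rhs => rw [← map_sub_vol x]
  rw [(sub_embed x).setIntegral_map f (Ioi (x - c)), h1]

private lemma integrableOn_comp_sub_Iio (f : ℝ → ℝ) (x c : ℝ) :
    IntegrableOn (fun y => f (x - y)) (Iio c) ↔ IntegrableOn f (Ioi (x - c)) := by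
  have h1 : (fun y : ℝ => x - y) ⁻¹' (Ioi (x - c)) = Iio c := by
    ext y; simp [sub_lt_sub_iff_left]
  have h2 := (sub_embed x).integrableOn_map_iff (f := f) (μ := (volume : Measure ℝ))
    (s := Ioi (x - c))
  rw [map_sub_vol x, h1] at h2
  exact ⟨fun h => h2.symm.mp h, fun h => h2.mp h⟩


private lemma map_subr_vol (x : ℝ) : Measure.map (fun y : ℝ => y - x) volume = volume := by
  simp_rw [sub_eq_add_neg]
  exact map_add_right_eq_self volume (-x)

private lemma subr_embed (x : ℝ) : MeasurableEmbedding (fun y : ℝ => y - x) := by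
  exact (Homeomorph.subRight x).isClosedEmbedding.measurableEmbedding

private lemma integral_comp_subr_Ioi (f : ℝ → ℝ) (x c : ℝ) :
    ∫ y in Ioi c, f (y - x) = ∫ t in Ioi (c - x), f t := by
  have h1 : (fun y : ℝ => y - x) ⁻¹' (Ioi (c - x)) = Ioi c := by
    ext y; simp [sub_lt_sub_iff_right]
  conv_rhs => rw [← map_subr_vol x]
  rw [(subr_embed x).setIntegral_map f (Ioi (c - x)), h1]

private lemma integrableOn_comp_subr_Ioi (f : ℝ → ℝ) (x c : ℝ) :
    IntegrableOn (fun y => f (y - x)) (Ioi c) ↔ IntegrableOn f (Ioi (c - x)) := by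
  have h1 : (fun y : ℝ => y - x) ⁻¹' (Ioi (c - x)) = Ioi c := by
    ext y; simp [sub_lt_sub_iff_right]
  have h2 := (subr_embed x).integrableOn_map_iff (f := f) (μ := (volume : Measure ℝ))
    (s := Ioi (c - x))
  rw [map_subr_vol x, h1] at h2
  exact ⟨fun h => h2.symm.mp h, fun h => h2.mp h⟩

-- integrability of translated quotient, generic
private lemma int_quot_Ioi {φ : ℝ → ℝ} (hφc : Continuous φ) (habs : ∀ t, |φ t| ≤ 1)
    {p : ℝ} (hp : 1 < p) (x c : ℝ) (hc : x < c) :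
    IntegrableOn (fun y => (φ y - φ x) / |x - y| ^ p) (Ioi c) := by
  have heq : (fun y : ℝ => (φ y - φ x) / |x - y| ^ p)
      = fun y => (fun t => (φ (x + t) - φ x) / |t| ^ p) (y - x) := by
    ext y; rw [abs_sub_comm]; ring_nf
  rw [heq]
  refine (integrableOn_comp_subr_Ioi (fun t => (φ (x + t) - φ x) / |t| ^ p) x c).mpr ?_
  have hcx : 0 < c - x := by linarith
  apply Integrable.mono' ((integrableOn_Ioi_rpow_of_lt (by linarith : -p < -1) hcx).const_mul 2)
  · apply Measurable.aestronglyMeasurable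
    apply Measurable.div
    · exact ((hφc.comp (continuous_const.add continuous_id)).sub continuous_const).measurable
    · exact continuous_abs.measurable.pow_const p
  · filter_upwards [ae_restrict_mem measurableSet_Ioi] with t ht
    have ht0 : (0:ℝ) < t := lt_trans hcx ht
    have htp : (0:ℝ) < t ^ p := Real.rpow_pos_of_pos ht0 _
    rw [Real.norm_eq_abs, abs_div, abs_of_pos ht0, abs_of_pos htp,
      Real.rpow_neg ht0.le, div_eq_mul_inv, mul_comm (2:ℝ) _, mul_comm _ ((t^p)⁻¹)]
    apply mul_le_mul_of_nonneg_left _ (by positivity)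
    have h1 := abs_le.mp (habs (x + t)); have h2 := abs_le.mp (habs x)
    apply abs_le.mpr ⟨by linarith, by linarith⟩

private lemma int_quot_Iio {φ : ℝ → ℝ} (hφc : Continuous φ) (habs : ∀ t, |φ t| ≤ 1)
    {p : ℝ} (hp : 1 < p) (x c : ℝ) (hc : c < x) :
    IntegrableOn (fun y => (φ y - φ x) / |x - y| ^ p) (Iio c) := by
  have heq : (fun y : ℝ => (φ y - φ x) / |x - y| ^ p)
      = fun y => (fun t => (φ (x - t) - φ x) / |t| ^ p) (x - y) := by
    ext y; simp
  rw [heq]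
  refine (integrableOn_comp_sub_Iio (fun t => (φ (x - t) - φ x) / |t| ^ p) x c).mpr ?_
  have hcx : 0 < x - c := by linarith
  apply Integrable.mono' ((integrableOn_Ioi_rpow_of_lt (by linarith : -p < -1) hcx).const_mul 2)
  · apply Measurable.aestronglyMeasurable
    apply Measurable.div
    · exact ((hφc.comp (continuous_const.sub continuous_id)).sub continuous_const).measurable
    · exact continuous_abs.measurable.pow_const p
  · filter_upwards [ae_restrict_mem measurableSet_Ioi] with t ht
    have ht0 : (0:ℝ) < t := lt_trans hcx ht
    have htp : (0:ℝ) < t ^ p := Real.rpow_pos_of_pos ht0 _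
    rw [Real.norm_eq_abs, abs_div, abs_of_pos ht0, abs_of_pos htp,
      Real.rpow_neg ht0.le, div_eq_mul_inv, mul_comm (2:ℝ) _, mul_comm _ ((t^p)⁻¹)]
    apply mul_le_mul_of_nonneg_left _ (by positivity)
    have h1 := abs_le.mp (habs (x - t)); have h2 := abs_le.mp (habs x)
    apply abs_le.mpr ⟨by linarith, by linarith⟩


private lemma taylor_bound {β : ℝ} (hβ : 0 < β) {x r : ℝ} (hx : 0 < x) (hr : 0 ≤ r)
    (hrx : r ≤ x / 2) :
    |(x + r) ^ (-β) + (x - r) ^ (-β) - 2 * x ^ (-β)|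
      ≤ 2 * (β * (β + 1) * (x / 2) ^ (-β - 2)) * r ^ 2 := by
  set K : ℝ := β * (β + 1) * (x / 2) ^ (-β - 2) with hK
  have hx2 : (0:ℝ) < x / 2 := by linarith
  -- step 1 : Lipschitz bound for ψ' t = -β * t ^ (-β-1) on Icc (x/2) (3x/2)
  have step1 : ∀ a ∈ Icc (x/2) (3*x/2), ∀ b ∈ Icc (x/2) (3*x/2),
      |(-β) * b ^ (-β-1) - (-β) * a ^ (-β-1)| ≤ K * |b - a| := by
    intro a ha b hb
    have key := Convex.norm_image_sub_le_of_norm_hasDerivWithin_le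
      (f := fun t : ℝ => (-β) * t ^ (-β-1))
      (f' := fun t : ℝ => (-β) * (((-β-1) * t ^ ((-β-1) - 1))))
      (s := Icc (x/2) (3*x/2)) (C := K) ?_ ?_ (convex_Icc _ _) ha hb
    · simpa [Real.norm_eq_abs] using key
    · intro t ht
      have ht0 : (0:ℝ) < t := lt_of_lt_of_le hx2 ht.1
      exact (((hasDerivAt_id t).rpow_const (Or.inl ht0.ne')).const_mul (-β)).hasDerivWithinAt.congr_deriv (by simp only [id_eq]; ring)
    · intro t ht
      have ht0 : (0:ℝ) < t := lt_of_lt_of_le hx2 ht.1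
      have h1 : |(-β) * ((-β-1) * t ^ ((-β-1) - 1))| = β * (β+1) * t ^ (-β-2) := by
        rw [abs_mul, abs_mul, abs_neg, abs_of_pos hβ, abs_of_neg (by linarith : -β-1 < 0),
          abs_of_pos (Real.rpow_pos_of_pos ht0 _)]
        ring_nf
      rw [Real.norm_eq_abs, h1, hK]
      have : t ^ (-β-2) ≤ (x/2) ^ (-β-2) :=
        Real.rpow_le_rpow_of_nonpos hx2 ht.1 (by linarith)
      exact mul_le_mul_of_nonneg_left this (by positivity)
  -- step 2 : second difference bound
  have step2 := Convex.norm_image_sub_le_of_norm_hasDerivWithin_le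
    (f := fun t : ℝ => (x + t) ^ (-β) + (x - t) ^ (-β))
    (f' := fun t : ℝ => (-β) * (x + t) ^ (-β-1) - (-β) * (x - t) ^ (-β-1))
    (s := Icc 0 r) (C := K * (2 * r)) ?_ ?_ (convex_Icc _ _)
    (left_mem_Icc.mpr hr) (right_mem_Icc.mpr hr)
  · simp only [Real.norm_eq_abs, add_zero, sub_zero, abs_of_nonneg hr] at step2
    have h0 : (x:ℝ) ^ (-β) + x ^ (-β) = 2 * x ^ (-β) := by ring
    rw [h0] at step2
    calc |(x + r) ^ (-β) + (x - r) ^ (-β) - 2 * x ^ (-β)| ≤ K * (2*r) * r := step2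
      _ = 2 * K * r ^ 2 := by ring
  · intro t ht
    have h1 : (0:ℝ) < x + t := by nlinarith [ht.1]
    have h2 : (0:ℝ) < x - t := by nlinarith [ht.2]
    have d1 : HasDerivAt (fun u : ℝ => (x + u) ^ (-β)) ((-β) * (x + t) ^ (-β-1)) t := by
      have := ((hasDerivAt_id t).const_add x).rpow_const (p := -β) (Or.inl h1.ne')
      convert this using 1; simp only [id_eq]; ring_nf; rfl
    have d2 : HasDerivAt (fun u : ℝ => (x - u) ^ (-β)) (-((-β) * (x - t) ^ (-β-1))) t := by
      have := ((hasDerivAt_id t).const_sub x).rpow_const (p := -β) (Or.inl h2.ne')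
      convert this using 1; simp only [id_eq]; ring_nf; rfl
    exact ((d1.add d2).congr_deriv (by ring)).hasDerivWithinAt
  · intro t ht
    have h1 : x + t ∈ Icc (x/2) (3*x/2) := ⟨by nlinarith [ht.1], by nlinarith [ht.2]⟩
    have h2 : x - t ∈ Icc (x/2) (3*x/2) := ⟨by nlinarith [ht.2], by nlinarith [ht.1]⟩
    have := step1 _ h2 _ h1
    have habs : |(x + t) - (x - t)| = 2 * t := by
      rw [show (x + t) - (x - t) = 2*t by ring, abs_of_nonneg (by linarith [ht.1])]
    rw [habs] at this
    rw [Real.norm_eq_abs]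
    calc |(-β) * (x+t) ^ (-β-1) - (-β) * (x-t) ^ (-β-1)| ≤ K * (2 * t) := this
      _ ≤ K * (2 * r) := by
        have hK0 : 0 ≤ K := by positivity
        nlinarith [ht.2]


private lemma key_repr {s β κ C₂ : ℝ} (hs : s ∈ Set.Ioo (0 : ℝ) 1)
    (hβ : β ∈ Set.Ioc 0 (2 * s)) (hκ : 0 < κ) (hC₂ : 0 < C₂)
    {φ : ℝ → ℝ} (hφc : Continuous φ) (habs : ∀ t, |φ t| ≤ 1)
    (hright : ∀ x : ℝ, κ < x → φ x = 1 - C₂ * |x| ^ (-β))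
    {Lφ : ℝ → ℝ} {x : ℝ} (hx : 2*κ + 2 < x)
    (hLx : Tendsto
      (fun ε : ℝ => ∫ y in {y : ℝ | ε < |y - x|}, (φ y - φ x) / |x - y| ^ (1 + 2 * s))
      (nhdsWithin 0 (Set.Ioi 0)) (nhds (Lφ x))) :
    Lφ x = (∫ y in Iio (x/2), (φ y - φ x) / |x - y| ^ (1 + 2 * s))
      + (∫ y in Ioi (3*x/2), (φ y - φ x) / |x - y| ^ (1 + 2 * s))
      + ∫ r in Ioc 0 (x/2), (φ (x+r) + φ (x-r) - 2*φ x) / r ^ (1 + 2 * s) := by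
  set p : ℝ := 1 + 2 * s with hpdef
  have hp : 1 < p := by simp only [hpdef]; nlinarith [hs.1]
  have hx0 : (0:ℝ) < x := by linarith
  have hx2 : (0:ℝ) < x/2 := by linarith
  have hκx : κ < x/2 := by linarith
  set h : ℝ → ℝ := fun y => (φ y - φ x) / |x - y| ^ p with hhdef
  set g : ℝ → ℝ := fun r => (φ (x+r) + φ (x-r) - 2*φ x) / r ^ p with hgdef
  have hgmeas : Measurable g := by
    apply Measurable.div
    · exact (((hφc.comp (continuous_const.add continuous_id)).add
        (hφc.comp (continuous_const.sub continuous_id))).sub continuous_const).measurable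
    · exact measurable_id.pow_const p
  set K : ℝ := 2 * (β * (β + 1) * (x / 2) ^ (-β - 2)) with hKdef
  have hK0 : 0 ≤ K := by
    have h1 : (0:ℝ) ≤ (x/2) ^ (-β-2) := (Real.rpow_pos_of_pos hx2 _).le
    rw [hKdef]
    exact mul_nonneg (by norm_num) (mul_nonneg (mul_nonneg hβ.1.le (by linarith [hβ.1])) h1)
  have hgbound : ∀ r ∈ Ioc (0:ℝ) (x/2), |g r| ≤ C₂ * K * r ^ (1 - 2*s) := by
    intro r hr
    have hr0 : 0 < r := hr.1
    have e1 : φ (x+r) = 1 - C₂ * (x+r) ^ (-β) := by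
      rw [hright _ (by linarith : κ < x + r), abs_of_pos (by linarith : (0:ℝ) < x + r)]
    have e2 : φ (x-r) = 1 - C₂ * (x-r) ^ (-β) := by
      rw [hright _ (by linarith [hr.2] : κ < x - r),
        abs_of_pos (by linarith [hr.2] : (0:ℝ) < x - r)]
    have e3 : φ x = 1 - C₂ * x ^ (-β) := by
      rw [hright _ (by linarith : κ < x), abs_of_pos hx0]
    have hnum : φ (x+r) + φ (x-r) - 2*φ x
        = -(C₂ * ((x+r) ^ (-β) + (x-r) ^ (-β) - 2 * x ^ (-β))) := by
      rw [e1, e2, e3]; ring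
    have htay := taylor_bound hβ.1 hx0 hr0.le hr.2
    have htay' : |(x+r) ^ (-β) + (x-r) ^ (-β) - 2 * x ^ (-β)| ≤ K * r^2 := by
      rw [hKdef]; exact htay
    have hrp : (0:ℝ) < r ^ p := Real.rpow_pos_of_pos hr0 _
    have habsg : |g r| = |φ (x+r) + φ (x-r) - 2*φ x| / r ^ p := by
      rw [hgdef]; simp only [abs_div, abs_of_pos hrp]
    rw [habsg, hnum, abs_neg, abs_mul, abs_of_pos hC₂, div_le_iff₀ hrp]
    have hrpow : r ^ (1 - 2*s) * r ^ p = r ^ 2 := by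
      rw [← Real.rpow_natCast r 2, ← Real.rpow_add hr0]
      norm_num [hpdef]
    calc C₂ * |(x+r) ^ (-β) + (x-r) ^ (-β) - 2 * x ^ (-β)|
        ≤ C₂ * (K * r ^ 2) := mul_le_mul_of_nonneg_left htay' hC₂.le
      _ = C₂ * K * r ^ (1 - 2*s) * r ^ p := by rw [← hrpow]; ring
  have hgint : IntegrableOn g (Ioc 0 (x/2)) := by
    have hrint : IntervalIntegrable (fun r : ℝ => r ^ (1 - 2*s)) volume 0 (x/2) :=
      intervalIntegral.intervalIntegrable_rpow' (by linarith [hs.2] : (-1:ℝ) < 1 - 2*s)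
    have hbint : IntegrableOn (fun r : ℝ => C₂ * K * r ^ (1 - 2*s)) (Ioc 0 (x/2)) :=
      ((intervalIntegrable_iff_integrableOn_Ioc_of_le hx2.le).mp hrint).const_mul (C₂ * K)
    apply Integrable.mono' hbint hgmeas.aestronglyMeasurable.restrict
    filter_upwards [ae_restrict_mem measurableSet_Ioc] with r hr
    rw [Real.norm_eq_abs]; exact hgbound r hr
  have hint_A : IntegrableOn h (Iio (x/2)) := int_quot_Iio hφc habs hp x _ (by linarith)
  have hint_B : IntegrableOn h (Ioi (3*x/2)) := int_quot_Ioi hφc habs hp x _ (by linarith)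
  -- DCT for the inner piece
  have hDCT : Tendsto (fun ε : ℝ => ∫ r in Ioc ε (x/2), g r) (nhdsWithin 0 (Set.Ioi 0))
      (nhds (∫ r in Ioc 0 (x/2), g r)) := by
    have heq : ∀ᶠ ε in nhdsWithin (0:ℝ) (Set.Ioi 0),
        ∫ r in Ioc ε (x/2), g r = ∫ r in Ioc 0 (x/2), (Ioi ε).indicator g r := by
      filter_upwards [self_mem_nhdsWithin] with ε (hε : 0 < ε)
      rw [setIntegral_indicator measurableSet_Ioi, Ioc_inter_Ioi,
        max_eq_right hε.le]
    have hdct := tendsto_integral_filter_of_dominated_convergence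
      (μ := volume.restrict (Ioc 0 (x/2))) (F := fun ε : ℝ => (Ioi ε).indicator g)
      (f := g) (l := nhdsWithin (0:ℝ) (Set.Ioi 0)) (bound := fun r => |g r|)
      (Eventually.of_forall fun ε =>
        (hgmeas.indicator measurableSet_Ioi).aestronglyMeasurable)
      (Eventually.of_forall fun ε => Eventually.of_forall fun r => by
        rw [Real.norm_eq_abs]
        exact (norm_indicator_le_norm_self g r : |((Ioi ε).indicator g) r| ≤ _))
      hgint.abs ?_
    · exact hdct.congr' (heq.mono fun ε hε => hε.symm)
    · filter_upwards [ae_restrict_mem measurableSet_Ioc] with r hr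
      apply Tendsto.congr' _ (tendsto_const_nhds (x := g r))
      filter_upwards [Ioo_mem_nhdsGT_of_mem (⟨le_refl (0:ℝ), hr.1⟩ : (0:ℝ) ∈ Ico 0 r)]
        with ε hε
      rw [indicator_of_mem (mem_Ioi.mpr hε.2)]
  refine tendsto_nhds_unique hLx ?_
  apply Tendsto.congr' _ ((tendsto_const_nhds (x := (∫ y in Iio (x/2), h y)
    + (∫ y in Ioi (3*x/2), h y))).add hDCT)
  filter_upwards [Ioo_mem_nhdsGT_of_mem (⟨le_refl (0:ℝ), hx2⟩ : (0:ℝ) ∈ Ico 0 (x/2))]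
    with ε hε
  obtain ⟨hε0, hεx⟩ := hε
  have hint_Iio : IntegrableOn h (Iio (x - ε)) := int_quot_Iio hφc habs hp x _ (by linarith)
  have hint_Ioi : IntegrableOn h (Ioi (x + ε)) := int_quot_Ioi hφc habs hp x _ (by linarith)
  have hset : {y : ℝ | ε < |y - x|} = Iio (x - ε) ∪ Ioi (x + ε) := by
    ext y
    simp only [mem_setOf_eq, mem_union, mem_Iio, mem_Ioi, lt_abs]
    constructor
    · rintro (hy | hy)
      · right; linarith
      · left; linarith
    · rintro (hy | hy)
      · right; linarith
      · left; linarith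
  have hdisj : Disjoint (Iio (x - ε)) (Ioi (x + ε)) :=
    (Iio_disjoint_Ici le_rfl).mono_right
      (Ioi_subset_Ici_self.trans (Ici_subset_Ici.mpr (by linarith)))
  have hsplitIio : ∫ y in Iio (x - ε), h y
      = (∫ y in Iio (x/2), h y) + ∫ y in Ico (x/2) (x - ε), h y := by
    rw [← setIntegral_union ((Iio_disjoint_Ici le_rfl).mono_right Ico_subset_Ici_self)
      measurableSet_Ico hint_A (hint_Iio.mono_set Ico_subset_Iio_self),
      Iio_union_Ico_eq_Iio (by linarith : x/2 ≤ x - ε)]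
  have hsplitIoi : ∫ y in Ioi (x + ε), h y
      = (∫ y in Ioc (x + ε) (3*x/2), h y) + ∫ y in Ioi (3*x/2), h y := by
    rw [← setIntegral_union (Ioc_disjoint_Ioi le_rfl) measurableSet_Ioi
      (hint_Ioi.mono_set Ioc_subset_Ioi_self) hint_B,
      Ioc_union_Ioi_eq_Ioi (by linarith : x + ε ≤ 3*x/2)]
  -- middle pieces via reflection
  have hf1 := intervalIntegral.integral_comp_sub_left (a := x/2) (b := x - ε)
    (f := fun t => (φ (x - t) - φ x) / |t| ^ p) x
  simp only [sub_sub_cancel] at hf1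
  rw [show x - x/2 = x/2 by ring] at hf1
  have hf2 := intervalIntegral.integral_comp_sub_right (a := x + ε) (b := 3*x/2)
    (f := fun t => (φ (x + t) - φ x) / |t| ^ p) x
  simp only [add_sub_cancel] at hf2
  rw [show x + ε - x = ε by ring, show 3*x/2 - x = x/2 by ring] at hf2
  have hcH : ContinuousOn (fun t : ℝ => (φ (x - t) - φ x) / |t| ^ p) (Icc ε (x/2)) := by
    intro t ht
    have ht0 : t ≠ 0 := by intro hc; rw [hc] at ht; exact absurd ht.1 (by linarith)
    apply ContinuousAt.continuousWithinAt
    apply ContinuousAt.div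
    · exact ((hφc.comp (continuous_const.sub continuous_id)).sub continuous_const).continuousAt
    · exact (Real.continuousAt_rpow_const _ _ (Or.inl (abs_ne_zero.mpr ht0))).comp
        continuous_abs.continuousAt
    · exact (Real.rpow_pos_of_pos (abs_pos.mpr ht0) p).ne'
  have hcK : ContinuousOn (fun t : ℝ => (φ (x + t) - φ x) / |t| ^ p) (Icc ε (x/2)) := by
    intro t ht
    have ht0 : t ≠ 0 := by intro hc; rw [hc] at ht; exact absurd ht.1 (by linarith)
    apply ContinuousAt.continuousWithinAt
    apply ContinuousAt.div
    · exact ((hφc.comp (continuous_const.add continuous_id)).sub continuous_const).continuousAt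
    · exact (Real.continuousAt_rpow_const _ _ (Or.inl (abs_ne_zero.mpr ht0))).comp
        continuous_abs.continuousAt
    · exact (Real.rpow_pos_of_pos (abs_pos.mpr ht0) p).ne'
  have hintH : IntegrableOn (fun t : ℝ => (φ (x - t) - φ x) / |t| ^ p) (Ioc ε (x/2)) :=
    (hcH.integrableOn_Icc).mono_set Ioc_subset_Icc_self
  have hintK : IntegrableOn (fun t : ℝ => (φ (x + t) - φ x) / |t| ^ p) (Ioc ε (x/2)) :=
    (hcK.integrableOn_Icc).mono_set Ioc_subset_Icc_self
  have hmid1 : ∫ y in Ico (x/2) (x - ε), h y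
      = ∫ t in Ioc ε (x/2), (φ (x - t) - φ x) / |t| ^ p := by
    rw [integral_Ico_eq_integral_Ioo, ← integral_Ioc_eq_integral_Ioo,
      ← intervalIntegral.integral_of_le (by linarith : x/2 ≤ x - ε),
      ← intervalIntegral.integral_of_le (by linarith : ε ≤ x/2), ← hf1]
  have hmid2 : ∫ y in Ioc (x + ε) (3*x/2), h y
      = ∫ t in Ioc ε (x/2), (φ (x + t) - φ x) / |t| ^ p := by
    rw [← intervalIntegral.integral_of_le (by linarith : x + ε ≤ 3*x/2),
      ← intervalIntegral.integral_of_le (by linarith : ε ≤ x/2), ← hf2]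
    apply intervalIntegral.integral_congr
    intro y _
    simp only [hhdef, abs_sub_comm x y]
  have hgsum : ∫ r in Ioc ε (x/2), g r
      = (∫ t in Ioc ε (x/2), (φ (x - t) - φ x) / |t| ^ p)
        + ∫ t in Ioc ε (x/2), (φ (x + t) - φ x) / |t| ^ p := by
    rw [← integral_add hintH hintK]
    apply setIntegral_congr_fun measurableSet_Ioc
    intro t ht
    have ht0 : 0 < t := lt_trans hε0 ht.1
    simp only [hgdef, abs_of_pos ht0]
    rw [← add_div]
    ring_nf
  rw [hset, setIntegral_union hdisj measurableSet_Ioi hint_Iio hint_Ioi,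
    hsplitIio, hsplitIoi, hmid1, hmid2, hgsum]
  ring

private lemma tendB {s β κ C₂ : ℝ} (hs : s ∈ Set.Ioo (0 : ℝ) 1)
    (hβ : β ∈ Set.Ioc 0 (2 * s)) (hκ : 0 < κ) (hC₂ : 0 < C₂)
    {φ : ℝ → ℝ} (hφc : Continuous φ) (habs : ∀ t, |φ t| ≤ 1)
    (hright : ∀ x : ℝ, κ < x → φ x = 1 - C₂ * |x| ^ (-β)) :
    Tendsto (fun x : ℝ => |x| ^ (2*s) *
      ∫ y in Ioi (3*x/2), (φ y - φ x) / |x - y| ^ (1 + 2 * s)) atTop (nhds 0) := by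
  have hs0 := hs.1
  set p : ℝ := 1 + 2 * s with hpdef
  have hp : 1 < p := by simp only [hpdef]; nlinarith
  apply squeeze_zero_norm' (a := fun x : ℝ => C₂ * 2 ^ (2*s) / (2*s) * x ^ (-β))
  · filter_upwards [eventually_gt_atTop (2*κ + 2)] with x hx
    have hx0 : (0:ℝ) < x := by linarith
    have hx2 : (0:ℝ) < x/2 := by linarith
    have hbint : IntegrableOn (fun y : ℝ => C₂ * x ^ (-β) * (y - x) ^ (-p)) (Ioi (3*x/2)) := by
      have := (integrableOn_comp_subr_Ioi (fun t : ℝ => C₂ * x ^ (-β) * t ^ (-p)) x (3*x/2)).mpr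
      rw [show 3*x/2 - x = x/2 by ring] at this
      exact this ((integrableOn_Ioi_rpow_of_lt (by linarith : -p < -1) hx2).const_mul _)
    have hIB : ‖∫ y in Ioi (3*x/2), (φ y - φ x) / |x - y| ^ p‖
        ≤ ∫ y in Ioi (3*x/2), C₂ * x ^ (-β) * (y - x) ^ (-p) := by
      apply norm_integral_le_of_norm_le hbint
      filter_upwards [ae_restrict_mem measurableSet_Ioi] with y hy
      have hyx : x < y := by have : 3*x/2 < y := hy; linarith
      have hyx0 : (0:ℝ) < y - x := by linarith
      have hy0 : (0:ℝ) < y := by linarith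
      have e1 : φ y = 1 - C₂ * y ^ (-β) := by
        rw [hright _ (by linarith : κ < y), abs_of_pos hy0]
      have e2 : φ x = 1 - C₂ * x ^ (-β) := by
        rw [hright _ (by linarith : κ < x), abs_of_pos hx0]
      have hmono : y ^ (-β) ≤ x ^ (-β) :=
        Real.rpow_le_rpow_of_nonpos hx0 hyx.le (by linarith [hβ.1])
      have hypos : (0:ℝ) < y ^ (-β) := Real.rpow_pos_of_pos hy0 _
      have habsxy : |x - y| = y - x := by rw [abs_sub_comm, abs_of_pos hyx0]
      rw [Real.norm_eq_abs, habsxy, e1, e2,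
        show 1 - C₂ * y ^ (-β) - (1 - C₂ * x ^ (-β)) = C₂ * (x ^ (-β) - y ^ (-β)) by ring,
        Real.rpow_neg hyx0.le, abs_div, abs_of_pos (Real.rpow_pos_of_pos hyx0 p),
        div_eq_mul_inv]
      apply mul_le_mul_of_nonneg_right _ (by positivity)
      rw [abs_mul, abs_of_pos hC₂, abs_of_nonneg (by linarith : (0:ℝ) ≤ x ^ (-β) - y ^ (-β))]
      nlinarith
    have hval : ∫ y in Ioi (3*x/2), C₂ * x ^ (-β) * (y - x) ^ (-p)
        = C₂ * x ^ (-β) * ((x/2) ^ (-(2*s)) / (2*s)) := by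
      have h1 := integral_comp_subr_Ioi (fun t : ℝ => C₂ * x ^ (-β) * t ^ (-p)) x (3*x/2)
      rw [show 3*x/2 - x = x/2 by ring] at h1
      rw [h1, MeasureTheory.integral_const_mul,
        integral_Ioi_rpow_of_lt (by linarith : -p < -1) hx2,
        show -p + 1 = -(2*s) by rw [hpdef]; ring]
      field_simp
    have hx2s : (0:ℝ) < x ^ (2*s) := Real.rpow_pos_of_pos hx0 _
    have h2s : (0:ℝ) < (2:ℝ) ^ (2*s) := Real.rpow_pos_of_pos (by norm_num) _
    have hxb : (0:ℝ) < x ^ (-β) := Real.rpow_pos_of_pos hx0 _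
    calc ‖|x| ^ (2*s) * ∫ y in Ioi (3*x/2), (φ y - φ x) / |x - y| ^ p‖
        = x ^ (2*s) * ‖∫ y in Ioi (3*x/2), (φ y - φ x) / |x - y| ^ p‖ := by
          rw [norm_mul, Real.norm_eq_abs (|x| ^ (2*s)), abs_of_pos hx0, abs_of_pos hx2s]
      _ ≤ x ^ (2*s) * (C₂ * x ^ (-β) * ((x/2) ^ (-(2*s)) / (2*s))) := by
          apply mul_le_mul_of_nonneg_left _ hx2s.le
          rw [← hval]; exact hIB
      _ = C₂ * 2 ^ (2*s) / (2*s) * x ^ (-β) := by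
          rw [Real.div_rpow hx0.le (by norm_num : (0:ℝ) ≤ 2), Real.rpow_neg hx0.le (2*s),
            Real.rpow_neg (by norm_num : (0:ℝ) ≤ 2) (2*s)]
          field_simp
  · have h1 : Tendsto (fun x : ℝ => x ^ (-β)) atTop (nhds 0) := tendsto_rpow_neg_atTop hβ.1
    simpa using h1.const_mul (C₂ * 2 ^ (2*s) / (2*s))

private lemma tendC {s β κ C₂ : ℝ} (hs : s ∈ Set.Ioo (0 : ℝ) 1)
    (hβ : β ∈ Set.Ioc 0 (2 * s)) (hκ : 0 < κ) (hC₂ : 0 < C₂)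
    {φ : ℝ → ℝ} (hφc : Continuous φ)
    (hright : ∀ x : ℝ, κ < x → φ x = 1 - C₂ * |x| ^ (-β)) :
    Tendsto (fun x : ℝ => |x| ^ (2*s) *
      ∫ r in Ioc 0 (x/2), (φ (x+r) + φ (x-r) - 2*φ x) / r ^ (1 + 2 * s)) atTop (nhds 0) := by
  have hs0 := hs.1
  have hs1 := hs.2
  set p : ℝ := 1 + 2 * s with hpdef
  have hp : 1 < p := by simp only [hpdef]; nlinarith
  set c0 : ℝ := C₂ * (2 * (β * (β + 1))) * 2 ^ (β + 2*s) / (2 - 2*s) with hc0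
  apply squeeze_zero_norm' (a := fun x : ℝ => c0 * x ^ (-β))
  · filter_upwards [eventually_gt_atTop (2*κ + 2)] with x hx
    have hx0 : (0:ℝ) < x := by linarith
    have hx2 : (0:ℝ) < x/2 := by linarith
    set g : ℝ → ℝ := fun r => (φ (x+r) + φ (x-r) - 2*φ x) / r ^ p with hgdef
    set K : ℝ := 2 * (β * (β + 1) * (x / 2) ^ (-β - 2)) with hKdef
    have hKpos : 0 < K := by
      have h1 : (0:ℝ) < (x/2) ^ (-β-2) := Real.rpow_pos_of_pos hx2 _
      rw [hKdef]
      have hb := hβ.1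
      positivity
    have hgbound : ∀ r ∈ Ioc (0:ℝ) (x/2), |g r| ≤ C₂ * K * r ^ (1 - 2*s) := by
      intro r hr
      have hr0 : 0 < r := hr.1
      have e1 : φ (x+r) = 1 - C₂ * (x+r) ^ (-β) := by
        rw [hright _ (by linarith : κ < x + r), abs_of_pos (by linarith : (0:ℝ) < x + r)]
      have e2 : φ (x-r) = 1 - C₂ * (x-r) ^ (-β) := by
        rw [hright _ (by linarith [hr.2] : κ < x - r),
          abs_of_pos (by linarith [hr.2] : (0:ℝ) < x - r)]
      have e3 : φ x = 1 - C₂ * x ^ (-β) := by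
        rw [hright _ (by linarith : κ < x), abs_of_pos hx0]
      have hnum : φ (x+r) + φ (x-r) - 2*φ x
          = -(C₂ * ((x+r) ^ (-β) + (x-r) ^ (-β) - 2 * x ^ (-β))) := by
        rw [e1, e2, e3]; ring
      have htay := taylor_bound hβ.1 hx0 hr0.le hr.2
      have htay' : |(x+r) ^ (-β) + (x-r) ^ (-β) - 2 * x ^ (-β)| ≤ K * r^2 := by
        rw [hKdef]; exact htay
      have hrp : (0:ℝ) < r ^ p := Real.rpow_pos_of_pos hr0 _
      have habsg : |g r| = |φ (x+r) + φ (x-r) - 2*φ x| / r ^ p := by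
        rw [hgdef]; simp only [abs_div, abs_of_pos hrp]
      rw [habsg, hnum, abs_neg, abs_mul, abs_of_pos hC₂, div_le_iff₀ hrp]
      have hrpow : r ^ (1 - 2*s) * r ^ p = r ^ 2 := by
        rw [← Real.rpow_natCast r 2, ← Real.rpow_add hr0]
        norm_num [hpdef]
      calc C₂ * |(x+r) ^ (-β) + (x-r) ^ (-β) - 2 * x ^ (-β)|
          ≤ C₂ * (K * r ^ 2) := mul_le_mul_of_nonneg_left htay' hC₂.le
        _ = C₂ * K * r ^ (1 - 2*s) * r ^ p := by rw [← hrpow]; ring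
    have hbint : IntegrableOn (fun r : ℝ => C₂ * K * r ^ (1 - 2*s)) (Ioc 0 (x/2)) :=
      ((intervalIntegrable_iff_integrableOn_Ioc_of_le hx2.le).mp
        (intervalIntegral.intervalIntegrable_rpow'
          (by linarith : (-1:ℝ) < 1 - 2*s))).const_mul (C₂ * K)
    have hIC : ‖∫ r in Ioc 0 (x/2), g r‖ ≤ ∫ r in Ioc 0 (x/2), C₂ * K * r ^ (1 - 2*s) := by
      apply norm_integral_le_of_norm_le hbint
      filter_upwards [ae_restrict_mem measurableSet_Ioc] with r hr
      rw [Real.norm_eq_abs]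
      exact hgbound r hr
    have hval : ∫ r in Ioc 0 (x/2), C₂ * K * r ^ (1 - 2*s)
        = C₂ * K * ((x/2) ^ (2 - 2*s) / (2 - 2*s)) := by
      rw [← intervalIntegral.integral_of_le hx2.le, intervalIntegral.integral_const_mul,
        integral_rpow (Or.inl (by linarith : (-1:ℝ) < 1 - 2*s))]
      rw [show 1 - 2*s + 1 = 2 - 2*s by ring, Real.zero_rpow (by linarith : 2 - 2*s ≠ 0)]
      ring
    have hx2s : (0:ℝ) < x ^ (2*s) := Real.rpow_pos_of_pos hx0 _
    calc ‖|x| ^ (2*s) * ∫ r in Ioc 0 (x/2), g r‖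
        = x ^ (2*s) * ‖∫ r in Ioc 0 (x/2), g r‖ := by
          rw [norm_mul, Real.norm_eq_abs (|x| ^ (2*s)), abs_of_pos hx0, abs_of_pos hx2s]
      _ ≤ x ^ (2*s) * (C₂ * K * ((x/2) ^ (2 - 2*s) / (2 - 2*s))) := by
          apply mul_le_mul_of_nonneg_left _ hx2s.le
          rw [← hval]; exact hIC
      _ = c0 * x ^ (-β) := by
          rw [hKdef, hc0]
          have e1 : (x/2) ^ (-β-2) * (x/2) ^ (2-2*s) = (x/2) ^ (-(β+2*s)) := by
            rw [← Real.rpow_add hx2]; ring_nf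
          have e2 : (x/2) ^ (-(β+2*s)) = x ^ (-(β+2*s)) * 2 ^ (β+2*s) := by
            rw [Real.div_rpow hx0.le (by norm_num : (0:ℝ) ≤ 2), Real.rpow_neg (by norm_num : (0:ℝ) ≤ 2) (β+2*s)]
            field_simp
          have e3 : x ^ (2*s) * x ^ (-(β+2*s)) = x ^ (-β) := by
            rw [← Real.rpow_add hx0]; ring_nf
          calc x ^ (2*s) * (C₂ * (2 * (β * (β + 1) * (x/2) ^ (-β-2))) * ((x/2) ^ (2 - 2*s) / (2 - 2*s)))
              = (C₂ * (2 * (β * (β + 1))) / (2 - 2*s)) * (x ^ (2*s) * ((x/2) ^ (-β-2) * (x/2) ^ (2-2*s))) := by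
                ring
            _ = (C₂ * (2 * (β * (β + 1))) / (2 - 2*s)) * (2 ^ (β+2*s) * (x ^ (2*s) * x ^ (-(β+2*s)))) := by
                rw [e1, e2]; ring
            _ = C₂ * (2 * (β * (β + 1))) * 2 ^ (β + 2*s) / (2 - 2*s) * x ^ (-β) := by
                rw [e3]; ring
  · have h1 : Tendsto (fun x : ℝ => x ^ (-β)) atTop (nhds 0) := tendsto_rpow_neg_atTop hβ.1
    simpa using h1.const_mul c0

private lemma tendA {s κ C₂ β : ℝ} (hs : s ∈ Set.Ioo (0 : ℝ) 1) (hκ : 0 < κ) (hC₂ : 0 < C₂)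
    (hβ : β ∈ Set.Ioc 0 (2 * s))
    {φ : ℝ → ℝ} (hφc : Continuous φ) (habs : ∀ t, |φ t| ≤ 1)
    (htop : Tendsto φ atTop (nhds 1)) (hbot : Tendsto φ atBot (nhds (-1))) :
    Tendsto (fun x : ℝ => |x| ^ (2*s) *
      ∫ y in Iio (x/2), (φ y - φ x) / |x - y| ^ (1 + 2 * s)) atTop (nhds (-(1/s))) := by
  have hs0 := hs.1
  set p : ℝ := 1 + 2 * s with hpdef
  have hp : 1 < p := by simp only [hpdef]; nlinarith
  set F : ℝ → ℝ → ℝ :=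
    fun x => (Iio (1/2:ℝ)).indicator (fun u => (φ (x*u) - φ x) * (1-u) ^ (-p)) with hFdef
  set Lf : ℝ → ℝ := (Iio (0:ℝ)).indicator (fun u => (-2) * (1-u) ^ (-p)) with hLfdef
  -- identity
  have hid : ∀ x : ℝ, 0 < x → ∫ u, F x u
      = |x| ^ (2*s) * ∫ y in Iio (x/2), (φ y - φ x) / |x - y| ^ p := by
    intro x hx0
    have hxp : (0:ℝ) < x ^ p := Real.rpow_pos_of_pos hx0 _
    have hfun : ∀ u : ℝ, F x u
        = x ^ p * (Iio (x/2)).indicator (fun y => (φ y - φ x) / |x - y| ^ p) (x*u) := by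
      intro u
      by_cases hu : u < 1/2
      · have hmem : x*u < x/2 := by nlinarith
        simp only [hFdef]
        rw [indicator_of_mem (mem_Iio.mpr hu), indicator_of_mem (mem_Iio.mpr hmem)]
        have h1u : (0:ℝ) < 1 - u := by linarith
        have h1up : (0:ℝ) < (1-u) ^ p := Real.rpow_pos_of_pos h1u _
        rw [show x - x*u = x*(1-u) by ring, abs_of_pos (by positivity : (0:ℝ) < x*(1-u)),
          Real.mul_rpow hx0.le h1u.le, Real.rpow_neg h1u.le]
        field_simp
      · have hmem : x*u ∉ Iio (x/2) := by
          simp only [mem_Iio]; push_neg at hu ⊢; nlinarith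
        have hu' : u ∉ Iio (1/2:ℝ) := by simpa using hu
        simp only [hFdef]
        rw [indicator_of_notMem hu', indicator_of_notMem hmem, mul_zero]
    calc ∫ u, F x u
        = ∫ u, x ^ p * (Iio (x/2)).indicator (fun y => (φ y - φ x) / |x - y| ^ p) (x*u) := by
          simp only [hfun]
      _ = x ^ p * ∫ u, (Iio (x/2)).indicator (fun y => (φ y - φ x) / |x - y| ^ p) (x*u) :=
          MeasureTheory.integral_const_mul _ _
      _ = x ^ p * (|x⁻¹| • ∫ y, (Iio (x/2)).indicator (fun y => (φ y - φ x) / |x - y| ^ p) y) := by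
          rw [MeasureTheory.Measure.integral_comp_mul_left
            ((Iio (x/2)).indicator fun y => (φ y - φ x) / |x - y| ^ p) x]
      _ = |x| ^ (2*s) * ∫ y in Iio (x/2), (φ y - φ x) / |x - y| ^ p := by
          rw [integral_indicator measurableSet_Iio, smul_eq_mul,
            abs_of_pos (inv_pos.mpr hx0), abs_of_pos hx0,
            show x ^ p = x * x ^ (2*s) by rw [hpdef, Real.rpow_add hx0, Real.rpow_one]]
          field_simp
  -- dominated convergence
  set bound : ℝ → ℝ := (Iio (1/2:ℝ)).indicator (fun u => 2 * (1-u) ^ (-p)) with hbdef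
  have hbound_int : Integrable bound := by
    have h0 := (integrableOn_comp_sub_Iio (fun t : ℝ => 2 * t ^ (-p)) 1 (1/2)).mpr
    rw [show (1:ℝ) - 1/2 = 1/2 by norm_num] at h0
    have h1 := h0 ((integrableOn_Ioi_rpow_of_lt (by linarith : -p < -1)
      (by norm_num : (0:ℝ) < 1/2)).const_mul 2)
    exact (h1.integrable_indicator measurableSet_Iio)
  have hmeasF : ∀ x : ℝ, AEStronglyMeasurable (F x) volume := by
    intro x
    apply Measurable.aestronglyMeasurable
    apply Measurable.indicator _ measurableSet_Iio
    exact (((hφc.comp (continuous_const.mul continuous_id)).sub continuous_const).measurable).mul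
      ((continuous_const.sub continuous_id).measurable.pow_const _)
  have hboundF : ∀ x : ℝ, ∀ u : ℝ, ‖F x u‖ ≤ bound u := by
    intro x u
    simp only [hFdef, hbdef]
    by_cases hu : u ∈ Iio (1/2:ℝ)
    · rw [indicator_of_mem hu, indicator_of_mem hu, Real.norm_eq_abs, abs_mul]
      have h1u : (0:ℝ) < 1 - u := by have := mem_Iio.mp hu; linarith
      rw [abs_of_pos (Real.rpow_pos_of_pos h1u _)]
      apply mul_le_mul_of_nonneg_right _ (Real.rpow_pos_of_pos h1u _).le
      have ha := abs_le.mp (habs (x*u)); have hb := abs_le.mp (habs x)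
      exact abs_le.mpr ⟨by linarith, by linarith⟩
    · rw [indicator_of_notMem hu, indicator_of_notMem hu]; simp
  have hlim : ∀ᵐ u : ℝ, Tendsto (fun x => F x u) atTop (nhds (Lf u)) := by
    have hne : ∀ᵐ u : ℝ, u ≠ (0:ℝ) := by
      have hset : {u : ℝ | ¬ u ≠ 0} = {0} := by ext u; simp
      rw [ae_iff, hset]; exact measure_singleton 0
    filter_upwards [hne] with u hu
    rcases lt_or_gt_of_ne hu with h0 | h0
    · have hLu : Lf u = -2 * (1-u) ^ (-p) := indicator_of_mem (mem_Iio.mpr h0) _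
      rw [hLu]
      apply Tendsto.congr (fun x =>
        (indicator_of_mem (mem_Iio.mpr (by linarith : u < 1/2)) _).symm)
      have hxu : Tendsto (fun x : ℝ => x * u) atTop atBot :=
        tendsto_id.atTop_mul_const_of_neg h0
      have h2 := ((hbot.comp hxu).sub htop).mul_const ((1-u) ^ (-p))
      rw [show (-1 - 1 : ℝ) * (1-u) ^ (-p) = -2 * (1-u) ^ (-p) by ring] at h2
      simpa [Function.comp] using h2
    · rcases lt_or_ge u (1/2) with h12 | h12
      · have hLu : Lf u = 0 := indicator_of_notMem (by simp only [mem_Iio]; linarith) _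
        rw [hLu]
        apply Tendsto.congr (fun x => (indicator_of_mem (mem_Iio.mpr h12) _).symm)
        have hxu : Tendsto (fun x : ℝ => x * u) atTop atTop :=
          tendsto_id.atTop_mul_const h0
        have h2 := ((htop.comp hxu).sub htop).mul_const ((1-u) ^ (-p))
        rw [show (1 - 1 : ℝ) * (1-u) ^ (-p) = 0 by ring] at h2
        simpa [Function.comp] using h2
      · have hLu : Lf u = 0 := indicator_of_notMem (by simp only [mem_Iio]; linarith) _
        rw [hLu]
        exact tendsto_const_nhds.congr (fun x =>
          (indicator_of_notMem (by simp only [mem_Iio]; exact not_lt.mpr h12) _).symm)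
  have hval : ∫ u, Lf u = -(1/s) := by
    rw [hLfdef, integral_indicator measurableSet_Iio, MeasureTheory.integral_const_mul]
    have h1 := integral_comp_sub_Iio (fun t : ℝ => t ^ (-p)) 1 0
    rw [sub_zero] at h1
    have h1' : ∫ u in Iio (0:ℝ), (1-u) ^ (-p) = ∫ t in Ioi (1:ℝ), t ^ (-p) := by
      simpa using h1
    rw [h1', integral_Ioi_rpow_of_lt (by linarith : -p < -1) one_pos, Real.one_rpow,
      show -p + 1 = -(2*s) by rw [hpdef]; ring]
    field_simp
  have hDCT := tendsto_integral_filter_of_dominated_convergence (μ := volume)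
    (F := F) (f := Lf) (l := atTop) bound
    (Eventually.of_forall hmeasF)
    (Eventually.of_forall fun x => ae_of_all _ (hboundF x))
    hbound_int hlim
  rw [hval] at hDCT
  apply hDCT.congr'
  filter_upwards [eventually_gt_atTop (0:ℝ)] with x hx
  exact hid x hx

/-- Asymptotics at `+∞` of the fractional Laplacian of a power-type transition layer:
`|x|^{2s} L_s φ(x) → -1/s` as `x → +∞`. -/
theorem stmt_5 (s α β κ C₁ C₂ : ℝ) (hs : s ∈ Set.Ioo (0 : ℝ) 1)
    (hα : α ∈ Set.Ioc 0 (2 * s)) (hβ : β ∈ Set.Ioc 0 (2 * s))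
    (hκ : 0 < κ) (hC₁ : 0 < C₁) (hC₂ : 0 < C₂)
    (φ : ℝ → ℝ) (hφ : ContDiff ℝ (⊤ : ℕ∞) φ) (hφ' : ∀ x : ℝ, 0 < deriv φ x)
    (hleft : ∀ x : ℝ, x < -κ → φ x = -1 + C₁ * |x| ^ (-α))
    (hright : ∀ x : ℝ, κ < x → φ x = 1 - C₂ * |x| ^ (-β))
    (Lφ : ℝ → ℝ)
    (hL : ∀ x : ℝ, Tendsto
      (fun ε : ℝ => ∫ y in {y : ℝ | ε < |y - x|}, (φ y - φ x) / |x - y| ^ (1 + 2 * s))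
      (nhdsWithin 0 (Set.Ioi 0)) (nhds (Lφ x))) :
    Tendsto (fun x : ℝ => |x| ^ (2 * s) * Lφ x) atTop (nhds (-(1 / s))) := by
  have hφc : Continuous φ := hφ.continuous
  have hmono : StrictMono φ := strictMono_of_deriv_pos hφ'
  have hub : ∀ t : ℝ, φ t < 1 := by
    intro t
    have h1 : t < max t κ + 1 := by have := le_max_left t κ; linarith
    have h2 : κ < max t κ + 1 := by have := le_max_right t κ; linarith
    calc φ t < φ (max t κ + 1) := hmono h1
      _ = 1 - C₂ * |max t κ + 1| ^ (-β) := hright _ h2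
      _ < 1 := by
        have : (0:ℝ) < |max t κ + 1| ^ (-β) :=
          Real.rpow_pos_of_pos (abs_pos.mpr (by positivity)) _
        nlinarith
  have hlb : ∀ t : ℝ, -1 < φ t := by
    intro t
    have h1 : min t (-κ) - 1 < t := by have := min_le_left t (-κ); linarith
    have h2 : min t (-κ) - 1 < -κ := by have := min_le_right t (-κ); linarith
    calc (-1:ℝ) < -1 + C₁ * |min t (-κ) - 1| ^ (-α) := by
          have : (0:ℝ) < |min t (-κ) - 1| ^ (-α) :=
            Real.rpow_pos_of_pos (abs_pos.mpr (by nlinarith [min_le_right t (-κ)])) _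
          nlinarith
      _ = φ (min t (-κ) - 1) := (hleft _ h2).symm
      _ < φ t := hmono h1
  have habs : ∀ t : ℝ, |φ t| ≤ 1 := fun t => abs_le.mpr ⟨(hlb t).le, (hub t).le⟩
  have htop : Tendsto φ atTop (nhds 1) := by
    have h1 : Tendsto (fun t : ℝ => 1 - C₂ * t ^ (-β)) atTop (nhds 1) := by
      have := (tendsto_rpow_neg_atTop hβ.1).const_mul C₂
      simpa using tendsto_const_nhds.sub this
    apply h1.congr'
    filter_upwards [eventually_gt_atTop κ, eventually_gt_atTop 0] with t ht ht0
    rw [hright t ht, abs_of_pos ht0]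
  have hbot : Tendsto φ atBot (nhds (-1)) := by
    have h1 : Tendsto (fun t : ℝ => -1 + C₁ * (-t) ^ (-α)) atBot (nhds (-1)) := by
      have h2 : Tendsto (fun t : ℝ => (-t) ^ (-α)) atBot (nhds 0) :=
        (tendsto_rpow_neg_atTop hα.1).comp tendsto_neg_atBot_atTop
      simpa using tendsto_const_nhds.add (h2.const_mul C₁)
    apply h1.congr'
    filter_upwards [eventually_lt_atBot (-κ), eventually_lt_atBot 0] with t ht ht0
    rw [hleft t ht, abs_of_neg ht0]
  have TA := tendA hs hκ hC₂ hβ hφc habs htop hbot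
  have TB := tendB hs hβ hκ hC₂ hφc habs hright
  have TC := tendC hs hβ hκ hC₂ hφc hright
  have hsum := TA.add (TB.add TC)
  rw [show -(1/s) + ((0:ℝ) + 0) = -(1/s) by ring] at hsum
  apply Tendsto.congr' _ hsum
  filter_upwards [eventually_gt_atTop (2*κ + 2)] with x hx
  rw [key_repr hs hβ hκ hC₂ hφc habs hright hx (hL x)]
  ring
end

section
/- Let s ∈ (0,1), v ∈ C^{2,β}(ℝ) for some β ∈ (0,1), and ū its Poisson extension ū(x,y) = ∫_ℝ H_s(ξ)v(x−yξ)dξ. Then the function w(x,y) := y^{1−2s}·∂_y ū(x,y) satisfies sup_{x∈ℝ, y>0} |w(x,y)| ≤ C·(‖v‖_{L^∞(ℝ)} + ‖v''‖_{L^∞(ℝ)}) for some C depending only on s. -/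
/-!
Writing `ū(x, y) = p ∫ y⁻¹ G(r / y) v(x - r) dr` with `G(ξ) = (1 + ξ²)^{-(1+2s)/2}` puts the
`y`-derivative on the kernel: `∂_y ū = -(p / y) ∫ K(ξ) v(x - y ξ) dξ` with `K = (ξ G)'`, and
`|K| ≤ 4 G`, `G(ξ) ≤ |ξ|^{-1-2s}`. As `K` is even, only the even part `v(x - y ξ) + v(x + y ξ)`
matters, and it is `2 v(x) + O(M₂ y² ξ²)`. Split at `|ξ| = 1 / y`: near `0` the constant `2 v(x)`
integrates to `2 v(x) y⁻¹ G(1 / y) = O(M₀ y^{2s})` and the remainder to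
`O(M₂ y² ∫₀^{1/y} ξ^{1-2s} dξ) = O(M₂ y^{2s})`; far from `0`, `O(M₀ ∫_{1/y}^∞ ξ^{-1-2s} dξ)` is
`O(M₀ y^{2s})`. The prefactor `y^{1-2s} · y⁻¹ = y^{-2s}` cancels `y^{2s}`.
-/

open MeasureTheory Filter Set Topology

/-- The Poisson extension of `v` in the upper half-plane. -/
noncomputable def poissonExt (s p : ℝ) (v : ℝ → ℝ) (x y : ℝ) : ℝ :=
  ∫ ξ : ℝ, p * (1 + ξ ^ 2) ^ (-((1 + 2 * s) / 2)) * v (x - y * ξ)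

open Real

lemma abs_sub_sub_mul_deriv_le {v : ℝ → ℝ} (hv : ContDiff ℝ 2 v) {M : ℝ}
    (hM : ∀ x, |iteratedDeriv 2 v x| ≤ M) (b c : ℝ) :
    |v b - v c - (b - c) * deriv v c| ≤ M * (b - c) ^ 2 := by
  have hv₁ : Differentiable ℝ v := hv.differentiable (by norm_num)
  have hv₂ : Differentiable ℝ (deriv v) :=
    (hv.iterate_deriv' 1 1).differentiable one_ne_zero
  have hderiv_lip : ∀ t, |deriv v t - deriv v c| ≤ M * |t - c| := fun t => by
    simpa using convex_univ.norm_image_sub_le_of_norm_deriv_le (fun t _ => hv₂ t)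
      (fun t _ => by simpa [iteratedDeriv_succ] using hM t) (mem_univ c) (mem_univ t)
  have hg : ∀ t, HasDerivAt (fun t => v t - v c - (t - c) * deriv v c)
      (deriv v t - deriv v c) t := fun t =>
    (((hv₁ t).hasDerivAt.sub_const (v c)).sub
      (((hasDerivAt_id t).sub_const c).mul_const (deriv v c))).congr_deriv (by simp)
  have := (convex_uIcc c b).norm_image_sub_le_of_norm_deriv_le (C := M * |b - c|)
    (fun t _ => (hg t).differentiableAt)
    (fun t ht => by
      rw [(hg t).deriv, norm_eq_abs]
      exact (hderiv_lip t).trans (mul_le_mul_of_nonneg_left (abs_sub_left_of_mem_uIcc ht)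
        ((abs_nonneg _).trans (hM 0))))
    left_mem_uIcc right_mem_uIcc
  simpa [mul_assoc, ← sq] using this

lemma integral_eq_setIntegral_Ioi_add_comp_neg {E : Type*} [NormedAddCommGroup E] [NormedSpace ℝ E]
    {f : ℝ → E} (hf : Integrable f) : ∫ ξ, f ξ = ∫ ξ in Ioi 0, (f ξ + f (-ξ)) := by
  rw [integral_add hf.integrableOn hf.comp_neg.integrableOn, integral_comp_neg_Ioi, neg_zero,
    add_comm, intervalIntegral.integral_Iic_add_Ioi hf.integrableOn hf.integrableOn]

lemma integral_comp_div_mul (f v : ℝ → ℝ) (x : ℝ) {t : ℝ} (ht : 0 < t) :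
    ∫ r, f (r / t) * v (x - r) = t * ∫ ξ, f ξ * v (x - t * ξ) := by
  have h : ∀ r, f (r / t) * v (x - r) = (fun ξ => f ξ * v (x - t * ξ)) (r / t) := fun r => by
    field_simp
  rw [integral_congr_ae (ae_of_all _ h)]
  exact (Measure.integral_comp_div (fun ξ => f ξ * v (x - t * ξ)) t).trans
    (by rw [abs_of_pos ht, smul_eq_mul])

noncomputable def poissonProfile (s ξ : ℝ) : ℝ := (1 + ξ ^ 2) ^ (-((1 + 2 * s) / 2))

/-- `K = (ξ ↦ ξ * poissonProfile s ξ)'`, the kernel in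
`∂_y ū(x, y) = -(p / y) ∫ K(ξ) v(x - y ξ) dξ`. -/
noncomputable def poissonDerivKernel (s ξ : ℝ) : ℝ :=
  poissonProfile s ξ * (1 - (1 + 2 * s) * ξ ^ 2 / (1 + ξ ^ 2))

section PoissonKernel

variable {s : ℝ}

lemma poissonProfile_pos (s ξ : ℝ) : 0 < poissonProfile s ξ := by
  unfold poissonProfile; positivity

@[simp]
lemma poissonProfile_neg (s ξ : ℝ) : poissonProfile s (-ξ) = poissonProfile s ξ := by
  simp [poissonProfile]

@[simp]
lemma poissonDerivKernel_neg (s ξ : ℝ) : poissonDerivKernel s (-ξ) = poissonDerivKernel s ξ := by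
  simp [poissonDerivKernel]

@[fun_prop]
lemma continuous_poissonProfile (s : ℝ) : Continuous (poissonProfile s) := by
  unfold poissonProfile
  exact Continuous.rpow_const (by fun_prop) fun ξ => Or.inl (by positivity)

@[fun_prop]
lemma continuous_poissonDerivKernel (s : ℝ) : Continuous (poissonDerivKernel s) := by
  unfold poissonDerivKernel
  exact (continuous_poissonProfile s).mul <| continuous_const.sub <|
    Continuous.div (by fun_prop) (by fun_prop) fun ξ => by positivity

lemma hasDerivAt_poissonProfile (s ξ : ℝ) :
    HasDerivAt (poissonProfile s) (-((1 + 2 * s) * ξ / (1 + ξ ^ 2)) * poissonProfile s ξ) ξ := by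
  have hpos : (0 : ℝ) < 1 + ξ ^ 2 := by positivity
  refine (((hasDerivAt_pow 2 ξ).const_add 1).rpow_const (Or.inl hpos.ne')).congr_deriv ?_
  rw [rpow_sub_one hpos.ne', poissonProfile]
  field_simp
  ring

lemma hasDerivAt_mul_poissonProfile (s ξ : ℝ) :
    HasDerivAt (fun ξ => ξ * poissonProfile s ξ) (poissonDerivKernel s ξ) ξ := by
  refine ((hasDerivAt_id ξ).mul (hasDerivAt_poissonProfile s ξ)).congr_deriv ?_
  rw [poissonDerivKernel, id_eq]
  ring

lemma abs_poissonDerivKernel_le (hs : s ∈ Icc (-1 / 2) 1) (ξ : ℝ) :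
    |poissonDerivKernel s ξ| ≤ 4 * poissonProfile s ξ := by
  have hG := poissonProfile_pos s ξ
  have hfrac : 0 ≤ ξ ^ 2 / (1 + ξ ^ 2) ∧ ξ ^ 2 / (1 + ξ ^ 2) ≤ 1 :=
    ⟨by positivity, div_le_one_of_le₀ (by linarith) (by positivity)⟩
  rw [poissonDerivKernel, abs_mul, abs_of_pos hG, mul_comm, mul_div_assoc]
  gcongr
  rw [abs_le]
  constructor <;> nlinarith [hs.1, hs.2]

lemma poissonProfile_le_rpow (hs : -1 / 2 ≤ s) {ξ : ℝ} (hξ : 0 < ξ) :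
    poissonProfile s ξ ≤ ξ ^ (-(1 + 2 * s)) := by
  calc poissonProfile s ξ ≤ (ξ ^ 2) ^ (-((1 + 2 * s) / 2)) :=
        rpow_le_rpow_of_nonpos (by positivity) (by linarith) (by linarith)
    _ = ξ ^ (-(1 + 2 * s)) := by
        rw [← rpow_natCast, ← rpow_mul hξ.le]
        ring_nf

lemma poissonProfile_le_of_sq_le (hs : -1 / 2 ≤ s) {α β : ℝ} (h : α ^ 2 ≤ β ^ 2) :
    poissonProfile s β ≤ poissonProfile s α :=
  rpow_le_rpow_of_nonpos (by positivity) (by linarith) (by linarith)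

lemma integrable_poissonProfile (hs : 0 < s) : Integrable (poissonProfile s) := by
  convert integrable_rpow_neg_one_add_norm_sq (E := ℝ) (μ := volume) (r := 1 + 2 * s)
    (by simp; linarith) using 2 with ξ
  rw [poissonProfile, norm_eq_abs, sq_abs, neg_div]

lemma integrable_poissonDerivKernel (hs : s ∈ Ioo 0 1) : Integrable (poissonDerivKernel s) :=
  ((integrable_poissonProfile hs.1).const_mul 4).mono'
    (continuous_poissonDerivKernel s).aestronglyMeasurable
    (Eventually.of_forall fun ξ => abs_poissonDerivKernel_le ⟨by linarith [hs.1], hs.2.le⟩ ξ)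

lemma integral_poissonDerivKernel (s r : ℝ) :
    ∫ ξ in (0 : ℝ)..r, poissonDerivKernel s ξ = r * poissonProfile s r := by
  rw [intervalIntegral.integral_eq_sub_of_hasDerivAt (fun ξ _ => hasDerivAt_mul_poissonProfile s ξ)
    ((continuous_poissonDerivKernel s).intervalIntegrable _ _)]
  simp

lemma mul_poissonProfile_le_rpow (hs : -1 / 2 ≤ s) {r : ℝ} (hr : 0 < r) :
    r * poissonProfile s r ≤ r ^ (-(2 * s)) := by
  calc r * poissonProfile s r ≤ r ^ (1 : ℝ) * r ^ (-(1 + 2 * s)) := by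
        rw [rpow_one]; exact mul_le_mul_of_nonneg_left (poissonProfile_le_rpow hs hr) hr.le
    _ = r ^ (-(2 * s)) := by rw [← rpow_add hr]; ring_nf

lemma poissonProfile_mul_sq_le_rpow (hs : -1 / 2 ≤ s) {ξ : ℝ} (hξ : 0 < ξ) :
    poissonProfile s ξ * ξ ^ 2 ≤ ξ ^ (1 - 2 * s) := by
  calc poissonProfile s ξ * ξ ^ 2 ≤ ξ ^ (-(1 + 2 * s)) * ξ ^ (2 : ℝ) := by
        rw [rpow_two]; exact mul_le_mul_of_nonneg_right (poissonProfile_le_rpow hs hξ) (sq_nonneg ξ)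
    _ = ξ ^ (1 - 2 * s) := by rw [← rpow_add hξ]; ring_nf

lemma abs_intervalIntegral_poissonDerivKernel_mul_le (hs : s ∈ Ico (-1 / 2) 1) {g : ℝ → ℝ} {B r : ℝ}
    (hg : ∀ ξ, |g ξ| ≤ B * ξ ^ 2) (hr : 0 ≤ r) :
    |∫ ξ in (0 : ℝ)..r, poissonDerivKernel s ξ * g ξ|
      ≤ 4 * B * (r ^ (2 - 2 * s) / (2 - 2 * s)) := by
  have hB : 0 ≤ B := by simpa using (abs_nonneg _).trans (hg 1)
  have hpow : ∫ ξ in (0 : ℝ)..r, ξ ^ (1 - 2 * s) = r ^ (2 - 2 * s) / (2 - 2 * s) := by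
    rw [integral_rpow (Or.inl (by linarith [hs.2])), zero_rpow (by linarith [hs.2])]
    ring_nf
  rw [← norm_eq_abs, ← hpow,
    ← intervalIntegral.integral_const_mul (4 * B) (fun ξ => ξ ^ (1 - 2 * s))]
  refine intervalIntegral.norm_integral_le_of_norm_le hr (Eventually.of_forall fun ξ hξ => ?_)
    ((intervalIntegral.intervalIntegrable_rpow' (r := 1 - 2 * s) (by linarith [hs.2])).const_mul _)
  calc ‖poissonDerivKernel s ξ * g ξ‖ ≤ 4 * poissonProfile s ξ * (B * ξ ^ 2) := by
        rw [norm_mul, norm_eq_abs, norm_eq_abs]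
        exact mul_le_mul (abs_poissonDerivKernel_le ⟨hs.1, hs.2.le⟩ ξ) (hg ξ) (abs_nonneg _)
          (by linarith [poissonProfile_pos s ξ])
    _ = 4 * B * (poissonProfile s ξ * ξ ^ 2) := by ring
    _ ≤ 4 * B * ξ ^ (1 - 2 * s) := by
        gcongr; exact poissonProfile_mul_sq_le_rpow hs.1 hξ.1

lemma abs_setIntegral_Ioi_poissonDerivKernel_mul_le (hs : s ∈ Ioo 0 1) {g : ℝ → ℝ} {B r : ℝ}
    (hg : ∀ ξ, |g ξ| ≤ B) (hr : 0 < r) :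
    |∫ ξ in Ioi r, poissonDerivKernel s ξ * g ξ| ≤ 4 * B * (r ^ (-(2 * s)) / (2 * s)) := by
  have hpow : ∫ ξ in Ioi r, ξ ^ (-(1 + 2 * s)) = r ^ (-(2 * s)) / (2 * s) := by
    rw [integral_Ioi_rpow_of_lt (by linarith [hs.1]) hr, neg_div, ← div_neg]
    ring_nf
  rw [← norm_eq_abs, ← hpow, ← integral_const_mul (4 * B) (fun ξ => ξ ^ (-(1 + 2 * s)))]
  refine norm_integral_le_of_norm_le
    ((integrableOn_Ioi_rpow_of_lt (a := -(1 + 2 * s)) (by linarith [hs.1]) hr).const_mul _)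
    ((ae_restrict_mem measurableSet_Ioi).mono fun ξ (hξ : r < ξ) => ?_)
  calc ‖poissonDerivKernel s ξ * g ξ‖ ≤ 4 * poissonProfile s ξ * B := by
        rw [norm_mul, norm_eq_abs, norm_eq_abs]
        exact mul_le_mul (abs_poissonDerivKernel_le ⟨by linarith [hs.1], hs.2.le⟩ ξ) (hg ξ)
          (abs_nonneg _) (by linarith [poissonProfile_pos s ξ])
    _ ≤ 4 * B * ξ ^ (-(1 + 2 * s)) := by
        have hB : 0 ≤ B := (abs_nonneg _).trans (hg 0)
        rw [mul_right_comm]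
        gcongr
        exact poissonProfile_le_rpow (by linarith [hs.1]) (hr.trans hξ)

lemma abs_setIntegral_Ioi_zero_poissonDerivKernel_mul_le (hs : s ∈ Ioo 0 1) {g : ℝ → ℝ}
    {B₀ B₂ r : ℝ} (hg : Continuous g) (hg₀ : ∀ ξ, |g ξ| ≤ B₀)
    (hg₂ : ∀ ξ, |g ξ - g 0| ≤ B₂ * ξ ^ 2) (hr : 0 < r) :
    |∫ ξ in Ioi 0, poissonDerivKernel s ξ * g ξ| ≤ 4 * B₂ * (r ^ (2 - 2 * s) / (2 - 2 * s))
      + B₀ * r ^ (-(2 * s)) + 4 * B₀ * (r ^ (-(2 * s)) / (2 * s)) := by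
  have hcont : ∀ c, Continuous fun ξ => poissonDerivKernel s ξ * (g ξ - c) := fun c => by fun_prop
  have hnear : ∫ ξ in (0 : ℝ)..r, poissonDerivKernel s ξ * g ξ
      = (∫ ξ in (0 : ℝ)..r, poissonDerivKernel s ξ * (g ξ - g 0))
        + g 0 * (r * poissonProfile s r) := by
    rw [← integral_poissonDerivKernel, ← intervalIntegral.integral_const_mul,
      ← intervalIntegral.integral_add ((hcont _).intervalIntegrable _ _)
        (((continuous_poissonDerivKernel s).const_mul _).intervalIntegrable _ _)]
    congr 1 with ξ
    ring
  have hfar : IntegrableOn (fun ξ => poissonDerivKernel s ξ * g ξ) (Ioi r) :=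
    ((integrable_poissonDerivKernel hs).mul_bdd hg.aestronglyMeasurable
      (ae_of_all _ hg₀)).integrableOn
  have hKg : Continuous fun ξ => poissonDerivKernel s ξ * g ξ := by fun_prop
  rw [← intervalIntegral.integral_interval_add_Ioi' (hKg.intervalIntegrable _ _) hfar, hnear]
  refine (abs_add_three _ _ _).trans (add_le_add_three
    (abs_intervalIntegral_poissonDerivKernel_mul_le ⟨by linarith [hs.1], hs.2⟩ hg₂ hr.le) ?_
    (abs_setIntegral_Ioi_poissonDerivKernel_mul_le hs hg₀ hr))
  have hflux := mul_pos hr (poissonProfile_pos s r)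
  rw [abs_mul, abs_of_pos hflux]
  exact mul_le_mul (hg₀ 0) (mul_poissonProfile_le_rpow (by linarith [hs.1]) hr)
    hflux.le ((abs_nonneg _).trans (hg₀ 0))

lemma abs_integral_poissonDerivKernel_mul_le (hs : s ∈ Ioo 0 1) {u : ℝ → ℝ} {M A d r : ℝ}
    (hu : Continuous u) (hM : ∀ ξ, |u ξ| ≤ M) (hA : ∀ ξ, |u ξ - u 0 - ξ * d| ≤ A * ξ ^ 2)
    (hr : 0 < r) :
    |∫ ξ, poissonDerivKernel s ξ * u ξ| ≤ 8 * A * (r ^ (2 - 2 * s) / (2 - 2 * s))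
      + 2 * M * r ^ (-(2 * s)) + 8 * M * (r ^ (-(2 * s)) / (2 * s)) := by
  rw [integral_eq_setIntegral_Ioi_add_comp_neg
    ((integrable_poissonDerivKernel hs).mul_bdd hu.aestronglyMeasurable (ae_of_all _ hM))]
  simp_rw [poissonDerivKernel_neg, ← mul_add]
  -- the first-order Taylor terms of `u ξ` and `u (-ξ)` cancel
  have heven : ∀ ξ, |u ξ + u (-ξ) - (u 0 + u (-0))| ≤ 2 * A * ξ ^ 2 := fun ξ => by
    rw [neg_zero, show u ξ + u (-ξ) - (u 0 + u 0)
      = (u ξ - u 0 - ξ * d) + (u (-ξ) - u 0 - -ξ * d) by ring]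
    linarith [abs_add_le (u ξ - u 0 - ξ * d) (u (-ξ) - u 0 - -ξ * d), hA ξ, hA (-ξ), neg_sq ξ]
  convert abs_setIntegral_Ioi_zero_poissonDerivKernel_mul_le hs (g := fun ξ => u ξ + u (-ξ))
    (by fun_prop) (fun ξ => (abs_add_le _ _).trans (add_le_add (hM ξ) (hM (-ξ)))) heven hr
    using 1
  ring

lemma poissonExt_eq_integral (s p : ℝ) (v : ℝ → ℝ) (x : ℝ) {t : ℝ} (ht : 0 < t) :
    poissonExt s p v x t = p * ∫ r, t⁻¹ * poissonProfile s (r / t) * v (x - r) := by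
  simp_rw [mul_assoc, integral_const_mul, integral_comp_div_mul _ _ _ ht,
    inv_mul_cancel_left₀ ht.ne']
  rw [poissonExt, ← integral_const_mul]
  simp_rw [poissonProfile, mul_assoc]

lemma hasDerivAt_inv_mul_poissonProfile_div (s r : ℝ) {t : ℝ} (ht : t ≠ 0) :
    HasDerivAt (fun t => t⁻¹ * poissonProfile s (r / t))
      (-(t ^ 2)⁻¹ * poissonDerivKernel s (r / t)) t := by
  simp only [div_eq_mul_inv r]
  refine ((hasDerivAt_inv ht).mul ((hasDerivAt_poissonProfile s (r * t⁻¹)).comp t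
    ((hasDerivAt_inv ht).const_mul r))).congr_deriv ?_
  simp only [poissonDerivKernel, Function.comp_apply]
  field_simp
  ring

lemma abs_poissonDerivKernel_div_le (hs : s ∈ Icc (-1 / 2) 1) (r : ℝ) {t c : ℝ} (ht : 0 < t)
    (htc : t ≤ c) : |poissonDerivKernel s (r / t)| ≤ 4 * poissonProfile s (r / c) := by
  refine (abs_poissonDerivKernel_le hs _).trans (mul_le_mul_of_nonneg_left
    (poissonProfile_le_of_sq_le hs.1 ?_) (by norm_num))
  rw [div_pow, div_pow]
  exact div_le_div_of_nonneg_left (sq_nonneg r) (by positivity) (pow_le_pow_left₀ ht.le htc 2)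

lemma hasDerivAt_integral_inv_mul_poissonProfile_div (hs : s ∈ Ioo 0 1) {v : ℝ → ℝ}
    (hv : Continuous v) {M : ℝ} (hM : ∀ z, |v z| ≤ M) (x : ℝ) {y : ℝ} (hy : 0 < y) :
    HasDerivAt (fun t => ∫ r, t⁻¹ * poissonProfile s (r / t) * v (x - r))
      (∫ r, -(y ^ 2)⁻¹ * poissonDerivKernel s (r / y) * v (x - r)) y := by
  have hball : ∀ t ∈ Metric.ball y (y / 2), y / 2 < t ∧ t < 3 * y / 2 := fun t ht => by
    rw [Metric.mem_ball, Real.dist_eq, abs_sub_lt_iff] at ht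
    constructor <;> linarith
  have hbound : ∀ r, ∀ t ∈ Metric.ball y (y / 2),
      ‖-(t ^ 2)⁻¹ * poissonDerivKernel s (r / t) * v (x - r)‖
        ≤ 16 * M / y ^ 2 * poissonProfile s (r / (3 * y / 2)) := fun r t ht => by
    obtain ⟨ht₁, ht₂⟩ := hball t ht
    have hinv : (t ^ 2)⁻¹ ≤ 4 / y ^ 2 := by
      rw [inv_le_comm₀ (by nlinarith) (by positivity), inv_div]
      nlinarith
    rw [norm_mul, norm_mul, norm_neg, norm_inv, norm_eq_abs, norm_eq_abs, norm_eq_abs,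
      abs_of_pos (by nlinarith : (0 : ℝ) < t ^ 2)]
    calc (t ^ 2)⁻¹ * |poissonDerivKernel s (r / t)| * |v (x - r)|
        ≤ 4 / y ^ 2 * (4 * poissonProfile s (r / (3 * y / 2))) * M := by
          have hG := poissonProfile_pos s (r / (3 * y / 2))
          refine mul_le_mul (mul_le_mul hinv ?_ (abs_nonneg _) (by positivity)) (hM _)
            (abs_nonneg _) (by positivity)
          exact abs_poissonDerivKernel_div_le ⟨by linarith [hs.1], hs.2.le⟩ r (by linarith) ht₂.le
      _ = 16 * M / y ^ 2 * poissonProfile s (r / (3 * y / 2)) := by ring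
  refine (hasDerivAt_integral_of_dominated_loc_of_deriv_le (Metric.ball_mem_nhds y (half_pos hy))
    (Eventually.of_forall fun t => (by fun_prop : Continuous _).aestronglyMeasurable)
    ((((integrable_poissonProfile hs.1).comp_div hy.ne').const_mul y⁻¹).mul_bdd
      (by fun_prop : Continuous fun r => v (x - r)).aestronglyMeasurable
      (ae_of_all _ fun r => hM (x - r)))
    (by fun_prop : Continuous _).aestronglyMeasurable (ae_of_all _ hbound)
    (((integrable_poissonProfile hs.1).comp_div (by positivity)).const_mul _)
    (ae_of_all _ fun r t ht => ?_)).2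
  exact (hasDerivAt_inv_mul_poissonProfile_div s r (by linarith [hball t ht])).mul_const _

lemma hasDerivAt_poissonExt (hs : s ∈ Ioo 0 1) (p : ℝ) {v : ℝ → ℝ} (hv : Continuous v) {M : ℝ}
    (hM : ∀ z, |v z| ≤ M) (x : ℝ) {y : ℝ} (hy : 0 < y) :
    HasDerivAt (fun t => poissonExt s p v x t)
      (-(p / y) * ∫ ξ, poissonDerivKernel s ξ * v (x - y * ξ)) y := by
  have h := (hasDerivAt_integral_inv_mul_poissonProfile_div hs hv hM x hy).const_mul p
  simp_rw [mul_assoc, integral_const_mul, integral_comp_div_mul _ _ _ hy] at h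
  refine (h.congr_of_eventuallyEq ?_).congr_deriv ?_
  · filter_upwards [eventually_gt_nhds hy] with t ht
    rw [poissonExt_eq_integral s p v x ht]
    simp_rw [mul_assoc, integral_const_mul]
  · field_simp

lemma abs_integral_poissonDerivKernel_mul_comp_le (hs : s ∈ Ioo 0 1) {v : ℝ → ℝ}
    (hv : ContDiff ℝ 2 v) {M₀ M₂ : ℝ} (hM₀ : ∀ z, |v z| ≤ M₀)
    (hM₂ : ∀ z, |iteratedDeriv 2 v z| ≤ M₂) (x : ℝ) {y : ℝ} (hy : 0 < y) :
    |∫ ξ, poissonDerivKernel s ξ * v (x - y * ξ)|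
      ≤ y ^ (2 * s) * (8 * M₂ / (2 - 2 * s) + 2 * M₀ + 4 * M₀ / s) := by
  have hs₂ : 2 - 2 * s ≠ 0 := by linarith [hs.2]
  have h := abs_integral_poissonDerivKernel_mul_le hs (u := fun ξ => v (x - y * ξ))
    (d := -(y * deriv v x)) (A := M₂ * y ^ 2) (by fun_prop) (fun ξ => hM₀ _)
    (fun ξ => by
      convert abs_sub_sub_mul_deriv_le hv hM₂ (x - y * ξ) x using 1
      · congr 1; ring_nf
      · ring)
    (inv_pos.2 hy)
  rw [inv_rpow hy.le, inv_rpow hy.le, rpow_sub hy, rpow_neg hy.le, inv_inv, rpow_two] at h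
  refine h.trans (le_of_eq ?_)
  field_simp [hs.1.ne', (rpow_pos_of_pos hy (2 * s)).ne']
  ring

end PoissonKernel

theorem stmt_11_general (s p : ℝ) (hs : s ∈ Set.Ioo (0 : ℝ) 1) (hp : 0 < p) :
    ∃ C > 0, ∀ (v : ℝ → ℝ) (β : ℝ), β ∈ Set.Ioo (0 : ℝ) 1 → ContDiff ℝ 2 v →
      (∃ K : ℝ, ∀ a b : ℝ, |iteratedDeriv 2 v a - iteratedDeriv 2 v b| ≤ K * |a - b| ^ β) →
      ∀ M₀ M₂ : ℝ, (∀ x : ℝ, |v x| ≤ M₀) → (∀ x : ℝ, |iteratedDeriv 2 v x| ≤ M₂) →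
      ∀ x y : ℝ, 0 < y →
        |y ^ (1 - 2 * s) * deriv (fun t : ℝ => poissonExt s p v x t) y| ≤ C * (M₀ + M₂) := by
  obtain ⟨hs₀, hs₁⟩ := hs
  have hs₂ : 0 < 2 - 2 * s := by linarith
  refine ⟨p * (8 / (2 - 2 * s) + 2 + 4 / s), by positivity, ?_⟩
  intro v β _ hv _ M₀ M₂ hM₀ hM₂ x y hy
  have hM₀' : 0 ≤ M₀ := (abs_nonneg _).trans (hM₀ 0)
  have hM₂' : 0 ≤ M₂ := (abs_nonneg _).trans (hM₂ 0)
  have hy₂ : 0 < y ^ (2 * s) := rpow_pos_of_pos hy _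
  rw [(hasDerivAt_poissonExt ⟨hs₀, hs₁⟩ p hv.continuous hM₀ x hy).deriv, rpow_sub hy, rpow_one,
    abs_mul, abs_mul, abs_neg, abs_of_pos (div_pos hy hy₂), abs_of_pos (div_pos hp hy)]
  calc y / y ^ (2 * s) * (p / y * |∫ ξ, poissonDerivKernel s ξ * v (x - y * ξ)|)
      ≤ y / y ^ (2 * s) * (p / y *
          (y ^ (2 * s) * (8 * M₂ / (2 - 2 * s) + 2 * M₀ + 4 * M₀ / s))) := by
        gcongr
        exact abs_integral_poissonDerivKernel_mul_comp_le ⟨hs₀, hs₁⟩ hv hM₀ hM₂ x hy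
    _ = p * (8 * M₂ / (2 - 2 * s) + 2 * M₀ + 4 * M₀ / s) := by field_simp
    _ ≤ p * (8 / (2 - 2 * s) + 2 + 4 / s) * (M₀ + M₂) := by
        have : 0 ≤ p * (8 * M₀ / (2 - 2 * s) + 2 * M₂ + 4 * M₂ / s) := by positivity
        linear_combination this

/-- Uniform bound for the conjugate function `w = y^{1-2s} ∂_y ū`:
`sup |w| ≤ C (‖v‖_∞ + ‖v''‖_∞)`, with `C` depending only on `s`. -/
theorem stmt_11 (s p : ℝ) (hs : s ∈ Set.Ioo (0 : ℝ) 1) (hp : 0 < p)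
    (hnorm : ∫ ξ : ℝ, p * (1 + ξ ^ 2) ^ (-((1 + 2 * s) / 2)) = 1) :
    ∃ C > 0, ∀ (v : ℝ → ℝ) (β : ℝ), β ∈ Set.Ioo (0 : ℝ) 1 → ContDiff ℝ 2 v →
      (∃ K : ℝ, ∀ a b : ℝ, |iteratedDeriv 2 v a - iteratedDeriv 2 v b| ≤ K * |a - b| ^ β) →
      ∀ M₀ M₂ : ℝ, (∀ x : ℝ, |v x| ≤ M₀) → (∀ x : ℝ, |iteratedDeriv 2 v x| ≤ M₂) →
      ∀ x y : ℝ, 0 < y →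
        |y ^ (1 - 2 * s) * deriv (fun t : ℝ => poissonExt s p v x t) y| ≤ C * (M₀ + M₂) :=
  stmt_11_general s p hs hp
end

section
/- For every α > 0 there exists a function f ∈ C^∞((0,1)) with lim_{x→0⁺} f(x)/x^α = 1, such that for every β ∈ (0,1] and every ε > 0, f is not β-Hölder continuous on (0,ε). -/
open Filter Set Topology

set_option maxHeartbeats 1600000 in
/-- For every `α > 0` there is a function `f`, smooth on `(0,1)` and behaving like `x^α`
at the origin, which is not `β`-Hölder near `0` for any `β ∈ (0,1]`. -/
theorem stmt_16 (α : ℝ) (hα : 0 < α) :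
    ∃ f : ℝ → ℝ, ContDiffOn ℝ (⊤ : ℕ∞) f (Set.Ioo 0 1) ∧
      Tendsto (fun x : ℝ => f x / x ^ α) (nhdsWithin 0 (Set.Ioi 0)) (nhds 1) ∧
      ∀ β : ℝ, β ∈ Set.Ioc (0 : ℝ) 1 → ∀ ε > 0,
        ¬ ∃ K : ℝ, ∀ x ∈ Set.Ioo (0 : ℝ) ε, ∀ y ∈ Set.Ioo (0 : ℝ) ε,
            |f x - f y| ≤ K * |x - y| ^ β := by
  classical
  have hπ : (3:ℝ) < Real.pi := Real.pi_gt_three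
  have hπ4 : Real.pi ≤ 4 := Real.pi_le_four
  set f : ℝ → ℝ := fun x => x ^ α + x ^ (α+1) * Real.sin (Real.exp x⁻¹) with hf
  refine ⟨f, ?_, ?_, ?_⟩
  · -- smoothness
    intro x hx
    have hx0 : x ≠ 0 := ne_of_gt hx.1
    have h1 : ContDiffAt ℝ (⊤ : ℕ∞) (fun x : ℝ => x ^ α) x := Real.contDiffAt_rpow_const_of_ne hx0
    have h2 : ContDiffAt ℝ (⊤ : ℕ∞) (fun x : ℝ => x ^ (α+1)) x := Real.contDiffAt_rpow_const_of_ne hx0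
    have h3 : ContDiffAt ℝ (⊤ : ℕ∞) (fun x : ℝ => Real.sin (Real.exp x⁻¹)) x :=
      (Real.contDiff_sin.contDiffAt).comp x
        ((Real.contDiff_exp.contDiffAt).comp x (contDiffAt_inv ℝ hx0))
    exact (h1.add (h2.mul h3)).contDiffWithinAt
  · -- limit
    have hcongr : ∀ x ∈ Set.Ioi (0:ℝ),
        1 + x * Real.sin (Real.exp x⁻¹) = f x / x ^ α := by
      intro x hx
      have hx0 : (0:ℝ) < x := hx
      have hxr : (0:ℝ) < x ^ α := Real.rpow_pos_of_pos hx0 α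
      have hsplit : x ^ (α+1) = x ^ α * x := by
        rw [Real.rpow_add hx0, Real.rpow_one]
      rw [hf]
      field_simp [hsplit]
      simp only [hsplit, add_comm 1 α]
      ring
    have hzero : Tendsto (fun x : ℝ => x * Real.sin (Real.exp x⁻¹))
        (nhdsWithin 0 (Set.Ioi 0)) (nhds 0) := by
      apply squeeze_zero_norm (a := fun x : ℝ => |x|) ?_ ?_
      · intro x
        have : |Real.sin (Real.exp x⁻¹)| ≤ 1 := Real.abs_sin_le_one _
        calc ‖x * Real.sin (Real.exp x⁻¹)‖ = |x| * |Real.sin (Real.exp x⁻¹)| := abs_mul _ _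
          _ ≤ |x| * 1 := by gcongr
          _ = |x| := mul_one _
      · have : Tendsto (fun x : ℝ => |x|) (nhds 0) (nhds 0) := by
          simpa using continuous_abs.tendsto (0:ℝ)
        exact this.mono_left nhdsWithin_le_nhds
    have : Tendsto (fun x : ℝ => 1 + x * Real.sin (Real.exp x⁻¹))
        (nhdsWithin 0 (Set.Ioi 0)) (nhds 1) := by
      simpa using tendsto_const_nhds.add hzero
    exact tendsto_nhdsWithin_congr hcongr this
  · -- not Hölder
    rintro β ⟨hβ0, hβ1⟩ ε hε ⟨K, hK⟩
    set K' : ℝ := |K| + 1 with hK'def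
    have hK'pos : (0:ℝ) < K' := by positivity
    have hKK' : K ≤ K' := (le_abs_self K).trans (by simp [hK'def])
    have hα1 : (0:ℝ) < α + 1 := by linarith
    set δ : ℝ := β / (2*(α+1)) with hδdef
    have hδpos : 0 < δ := by positivity
    set M : ℝ := K' * ((14:ℝ) ^ (β/2) / δ ^ (α+1)) with hMdef
    set t : ℕ → ℝ := fun n => Real.pi/2 + n * (2*Real.pi) with htdef
    set s : ℕ → ℝ := fun n => (Real.pi/2 + Real.pi) + n * (2*Real.pi) with hsdef
    -- pick n
    have hten : Tendsto (fun n : ℕ => (Real.log (t n))⁻¹) atTop (nhds 0) := by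
      have h1 : Tendsto (fun n : ℕ => t n) atTop atTop := by
        apply Filter.tendsto_atTop_add_const_left
        apply Tendsto.atTop_mul_const (by positivity)
        exact tendsto_natCast_atTop_atTop
      exact tendsto_inv_atTop_zero.comp (Real.tendsto_log_atTop.comp h1)
    have hrp : Tendsto (fun n : ℕ => (n:ℝ) ^ (β/2)) atTop atTop :=
      (tendsto_rpow_atTop (by positivity)).comp tendsto_natCast_atTop_atTop
    have hev : ∀ᶠ n : ℕ in atTop,
        1 ≤ n ∧ (Real.log (t n))⁻¹ < ε ∧ M < (n:ℝ) ^ (β/2) :=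
      (eventually_ge_atTop 1).and ((hten.eventually_lt_const hε).and
        (hrp.eventually_gt_atTop M))
    obtain ⟨n, hn1, haε, hnM⟩ := hev.exists
    have hn1' : (1:ℝ) ≤ (n:ℝ) := by exact_mod_cast hn1
    have hnpos : (0:ℝ) < n := by linarith
    -- basic bounds
    have htpos : 0 < t n := by
      have : (0:ℝ) ≤ (n:ℝ) * (2*Real.pi) := by positivity
      rw [htdef]; dsimp only; nlinarith
    have hts : t n < s n := by rw [htdef, hsdef]; dsimp only; nlinarith
    have hspos : 0 < s n := lt_trans htpos hts
    have hst : s n - t n = Real.pi := by rw [htdef, hsdef]; dsimp only; ring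
    have ht6 : (6:ℝ) ≤ t n := by
      rw [htdef]; dsimp only; nlinarith
    have htn : Real.pi * n ≤ t n := by
      rw [htdef]; dsimp only; nlinarith
    have hs14 : s n ≤ 14 * n := by
      rw [hsdef]; dsimp only; nlinarith
    have hlt1 : (1:ℝ) ≤ Real.log (t n) := by
      rw [Real.le_log_iff_exp_le htpos]
      have := Real.exp_one_lt_d9
      linarith
    have hls1 : (1:ℝ) ≤ Real.log (s n) :=
      hlt1.trans (Real.log_le_log htpos hts.le)
    have hltpos : 0 < Real.log (t n) := lt_of_lt_of_le one_pos hlt1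
    have hlspos : 0 < Real.log (s n) := lt_of_lt_of_le one_pos hls1
    have hlts : Real.log (t n) < Real.log (s n) := Real.log_lt_log htpos hts
    set a : ℝ := (Real.log (t n))⁻¹ with hadef
    set b : ℝ := (Real.log (s n))⁻¹ with hbdef
    have hbpos : 0 < b := by positivity
    have hba : b < a := by
      rw [hadef, hbdef]
      exact inv_strictAnti₀ hltpos hlts
    have ha1 : a ≤ 1 := by
      rw [hadef]
      calc (Real.log (t n))⁻¹ ≤ 1⁻¹ := by
            apply inv_anti₀ one_pos hlt1
        _ = 1 := inv_one
    have haε' : a < ε := haε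
    have hamem : a ∈ Set.Ioo (0:ℝ) ε := ⟨lt_trans hbpos hba, haε'⟩
    have hbmem : b ∈ Set.Ioo (0:ℝ) ε := ⟨hbpos, lt_trans hba haε'⟩
    -- sin values
    have hsina : Real.sin (Real.exp a⁻¹) = 1 := by
      rw [hadef, inv_inv, Real.exp_log htpos, htdef]
      dsimp only
      rw [Real.sin_add_nat_mul_two_pi, Real.sin_pi_div_two]
    have hsinb : Real.sin (Real.exp b⁻¹) = -1 := by
      rw [hbdef, inv_inv, Real.exp_log hspos, hsdef]
      dsimp only
      rw [Real.sin_add_nat_mul_two_pi, Real.sin_add_pi, Real.sin_pi_div_two]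
    -- lower bound on |f a - f b|
    have hfab : b ^ (α+1) ≤ |f a - f b| := by
      have h1 : b ^ α ≤ a ^ α := Real.rpow_le_rpow hbpos.le hba.le hα.le
      have h2 : (0:ℝ) ≤ a ^ (α+1) := Real.rpow_nonneg (le_of_lt (lt_trans hbpos hba)) _
      have hval : f a - f b = (a ^ α - b ^ α) + (a ^ (α+1) + b ^ (α+1)) := by
        rw [hf]; dsimp only
        rw [hsina, hsinb]; ring
      have : b ^ (α+1) ≤ f a - f b := by rw [hval]; linarith
      exact this.trans (le_abs_self _)
    -- upper bound on a - b
    have hab_le : a - b ≤ 1 / n := by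
      have h1 : a - b = (Real.log (s n) - Real.log (t n)) / (Real.log (t n) * Real.log (s n)) := by
        rw [hadef, hbdef]
        field_simp
      have h2 : Real.log (s n) - Real.log (t n) ≤ Real.pi / t n := by
        have hq : Real.log (s n) - Real.log (t n) = Real.log (s n / t n) := by
          rw [Real.log_div (ne_of_gt hspos) (ne_of_gt htpos)]
        rw [hq]
        have := Real.log_le_sub_one_of_pos (div_pos hspos htpos)
        have heq : s n / t n - 1 = Real.pi / t n := by
          field_simp
          linarith [hst]
        linarith [heq ▸ this]
      have h3 : Real.pi / t n ≤ 1 / n := by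
        rw [div_le_div_iff₀ htpos hnpos]
        linarith [htn]
      have h4 : (1:ℝ) ≤ Real.log (t n) * Real.log (s n) := by
        calc (1:ℝ) = 1 * 1 := by norm_num
          _ ≤ Real.log (t n) * Real.log (s n) :=
            mul_le_mul hlt1 hls1 zero_le_one (by linarith)
      calc a - b = (Real.log (s n) - Real.log (t n)) / (Real.log (t n) * Real.log (s n)) := h1
        _ ≤ Real.log (s n) - Real.log (t n) := div_le_self (by linarith) h4
        _ ≤ Real.pi / t n := h2
        _ ≤ 1 / n := h3
    -- bound on (log s)^(α+1)
    have hlog_bound : Real.log (s n) ^ (α+1) ≤ (14:ℝ) ^ (β/2) / δ ^ (α+1) * (n:ℝ) ^ (β/2) := by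
      have h1 : Real.log (s n) ≤ s n ^ δ / δ := by
        have hle := Real.log_le_sub_one_of_pos (Real.rpow_pos_of_pos hspos δ)
        have hlr : Real.log (s n ^ δ) = δ * Real.log (s n) := Real.log_rpow hspos δ
        rw [hlr] at hle
        rw [le_div_iff₀ hδpos]
        have hpow : (0:ℝ) < s n ^ δ := Real.rpow_pos_of_pos hspos δ
        linarith
      have h2 : Real.log (s n) ^ (α+1) ≤ (s n ^ δ / δ) ^ (α+1) :=
        Real.rpow_le_rpow (by linarith) h1 hα1.le
      have hδa : δ * (α+1) = β/2 := by
        rw [hδdef, div_mul_eq_mul_div, mul_comm (2:ℝ) (α+1), ← div_div,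
          mul_div_assoc, div_self hα1.ne', mul_one]
      have h3 : (s n ^ δ / δ) ^ (α+1) = s n ^ (β/2) / δ ^ (α+1) := by
        rw [Real.div_rpow (Real.rpow_nonneg hspos.le δ) hδpos.le,
          ← Real.rpow_mul hspos.le, hδa]
      have h4 : s n ^ (β/2) ≤ (14:ℝ) ^ (β/2) * (n:ℝ) ^ (β/2) := by
        rw [← Real.mul_rpow (by norm_num : (0:ℝ) ≤ 14) hnpos.le]
        exact Real.rpow_le_rpow hspos.le hs14 (by positivity)
      calc Real.log (s n) ^ (α+1) ≤ (s n ^ δ / δ) ^ (α+1) := h2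
        _ = s n ^ (β/2) / δ ^ (α+1) := h3
        _ ≤ ((14:ℝ) ^ (β/2) * (n:ℝ) ^ (β/2)) / δ ^ (α+1) := by gcongr
        _ = (14:ℝ) ^ (β/2) / δ ^ (α+1) * (n:ℝ) ^ (β/2) := by ring
    -- final contradiction
    have hP : (0:ℝ) < Real.log (s n) ^ (α+1) := Real.rpow_pos_of_pos hlspos _
    have hQ : (0:ℝ) < (n:ℝ) ^ β := Real.rpow_pos_of_pos hnpos _
    have hhalf : (0:ℝ) < (n:ℝ) ^ (β/2) := Real.rpow_pos_of_pos hnpos _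
    have hmain : K' * Real.log (s n) ^ (α+1) < (n:ℝ) ^ β := by
      calc K' * Real.log (s n) ^ (α+1)
          ≤ K' * ((14:ℝ) ^ (β/2) / δ ^ (α+1) * (n:ℝ) ^ (β/2)) := by
            apply mul_le_mul_of_nonneg_left hlog_bound hK'pos.le
        _ = M * (n:ℝ) ^ (β/2) := by rw [hMdef]; ring
        _ < (n:ℝ) ^ (β/2) * (n:ℝ) ^ (β/2) := by
            apply mul_lt_mul_of_pos_right hnM hhalf
        _ = (n:ℝ) ^ β := by
            rw [← Real.rpow_add hnpos]; ring_nf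
    have hfinal : K' * (1 / (n:ℝ)) ^ β < b ^ (α+1) := by
      have hb1 : b ^ (α+1) = (Real.log (s n) ^ (α+1))⁻¹ := by
        rw [hbdef, ← Real.inv_rpow hlspos.le]
      have hinv : (1 / (n:ℝ)) ^ β = 1 / (n:ℝ) ^ β := by
        rw [Real.div_rpow zero_le_one hnpos.le, Real.one_rpow]
      rw [hb1, hinv, mul_one_div, ← one_div]
      rw [div_lt_div_iff₀ hQ hP]
      linarith
    have habs : |a - b| ≤ 1 / (n:ℝ) := by
      rw [abs_of_pos (by linarith : (0:ℝ) < a - b)]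
      exact hab_le
    have hchain : |f a - f b| < |f a - f b| := by
      calc |f a - f b| ≤ K * |a - b| ^ β := hK a hamem b hbmem
        _ ≤ K' * |a - b| ^ β := by
            apply mul_le_mul_of_nonneg_right hKK' (Real.rpow_nonneg (abs_nonneg _) _)
        _ ≤ K' * (1 / (n:ℝ)) ^ β := by
            apply mul_le_mul_of_nonneg_left
              (Real.rpow_le_rpow (abs_nonneg _) habs hβ0.le) hK'pos.le
        _ < b ^ (α+1) := hfinal
        _ ≤ |f a - f b| := hfab
    exact absurd hchain (lt_irrefl _)
end
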